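/- arXiv:1810.06838 — 9 statements merged into one kernel-verified Lean document; each statement's English description precedes it below -/
import Mathlib

section
/- Let g : ℝ → ℝ be differentiable and non-negative, and let c ≥ 0. Suppose that |g'(t)| ≤ 2c·g(t)^{3/2} for all t with c·|t|·√(g(0)) ≤ 1. Then for all t with c·|t|·√(g(0)) ≤ 1, one has g(0)/(1 + c|t|√(g(0)))² ≤ g(t) ≤ g(0)/(1 − c|t|√(g(0)))² (the upper bound interpreted as holding whenever the denominator is positive). -/
open Real Filter

private lemma rpow_three_half' (x : ℝ) (hx : 0 ≤ x) :
    x ^ (3/2 : ℝ) = x * Real.sqrt x := by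
  rcases eq_or_lt_of_le hx with h | h
  · simp [← h, Real.zero_rpow]
  · rw [show (3/2 : ℝ) = 1 + 1/2 by norm_num, Real.rpow_add h, Real.rpow_one,
      Real.sqrt_eq_rpow]

private lemma nesterov_key (g : ℝ → ℝ) (c : ℝ) (hg : Differentiable ℝ g)
    (hpos : ∀ t, 0 ≤ g t) (hc : 0 ≤ c)
    (hsc : ∀ t : ℝ, c * |t| * Real.sqrt (g 0) ≤ 1 →
      |deriv g t| ≤ 2 * c * (g t) ^ (3/2 : ℝ))
    (t : ℝ) (ht : c * |t| * Real.sqrt (g 0) ≤ 1) (ε : ℝ) (hε : 0 < ε) :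
    |(Real.sqrt (g t + ε))⁻¹ - (Real.sqrt (g 0 + ε))⁻¹| ≤ c * |t| := by
  set h : ℝ → ℝ := fun u => (Real.sqrt (g u + ε))⁻¹ with hh
  have hsp : ∀ u : ℝ, 0 < Real.sqrt (g u + ε) := fun u =>
    Real.sqrt_pos.mpr (by have := hpos u; linarith)
  have hd : ∀ u : ℝ, HasDerivAt h
      (-(deriv g u / (2 * Real.sqrt (g u + ε))) / (Real.sqrt (g u + ε)) ^ 2) u := by
    intro u
    have h1 : HasDerivAt (fun u => g u + ε) (deriv g u) u :=
      ((hg u).hasDerivAt).add_const ε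
    have h2 := h1.sqrt (by have := hpos u; positivity)
    exact h2.inv (hsp u).ne'
  have habs : ∀ u ∈ Set.uIcc 0 t, |u| ≤ |t| := by
    intro u hu
    rcases Set.mem_uIcc.mp hu with ⟨h1, h2⟩ | ⟨h1, h2⟩
    · rw [abs_of_nonneg h1, abs_of_nonneg (le_trans h1 h2)]; exact h2
    · rw [abs_of_nonpos h2, abs_of_nonpos (le_trans h1 h2)]; linarith
  have bound : ∀ u ∈ Set.uIcc 0 t, ‖deriv h u‖ ≤ c := by
    intro u hu
    rw [(hd u).deriv]
    have hu1 : c * |u| * Real.sqrt (g 0) ≤ 1 := by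
      refine le_trans ?_ ht
      have := habs u hu
      gcongr
    have hD := hsc u hu1
    have hle : (g u) ^ (3/2 : ℝ) ≤ (g u + ε) * Real.sqrt (g u + ε) := by
      rw [rpow_three_half' _ (hpos u)]
      have h1 : Real.sqrt (g u) ≤ Real.sqrt (g u + ε) := Real.sqrt_le_sqrt (by linarith)
      nlinarith [hpos u, Real.sqrt_nonneg (g u), hsp u]
    set s := Real.sqrt (g u + ε) with hs
    have hs2 : s ^ 2 = g u + ε := Real.sq_sqrt (by have := hpos u; linarith)
    have hspos := hsp u
    rw [Real.norm_eq_abs, abs_div, abs_neg, abs_div]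
    rw [div_div, div_le_iff₀ (by positivity)]
    have hDb : |deriv g u| ≤ 2 * c * (g u + ε) * s := by
      calc |deriv g u| ≤ 2 * c * (g u) ^ (3/2:ℝ) := hD
        _ ≤ 2 * c * ((g u + ε) * s) := by nlinarith [Real.rpow_nonneg (hpos u) (3/2:ℝ)]
        _ = 2 * c * (g u + ε) * s := by ring
    calc |deriv g u| ≤ 2 * c * (g u + ε) * s := hDb
      _ ≤ c * (|2 * s| * |s ^ 2|) := by
          rw [abs_of_nonneg (by positivity : (0:ℝ) ≤ 2*s),
            abs_of_nonneg (by positivity : (0:ℝ) ≤ s^2)]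
          rw [hs2]; ring_nf
          exact le_refl _
  have := Convex.norm_image_sub_le_of_norm_deriv_le (f := h) (s := Set.uIcc 0 t)
    (fun u _ => (hd u).differentiableAt) bound (convex_uIcc 0 t)
    Set.left_mem_uIcc Set.right_mem_uIcc
  simpa [Real.norm_eq_abs] using this

private lemma nesterov_eps (g : ℝ → ℝ) (c : ℝ) (t ε : ℝ) (hε : 0 < ε)
    (hpos : ∀ t, 0 ≤ g t) (hc : 0 ≤ c)
    (key : |(Real.sqrt (g t + ε))⁻¹ - (Real.sqrt (g 0 + ε))⁻¹| ≤ c * |t|) :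
    (g 0 + ε) / (1 + c * |t| * Real.sqrt (g 0 + ε)) ^ 2 ≤ g t + ε ∧
    (c * |t| * Real.sqrt (g 0 + ε) < 1 →
      g t + ε ≤ (g 0 + ε) / (1 - c * |t| * Real.sqrt (g 0 + ε)) ^ 2) := by
  set a := Real.sqrt (g t + ε) with hadef
  set b := Real.sqrt (g 0 + ε) with hbdef
  set k := c * |t| with hkdef
  have ha : 0 < a := Real.sqrt_pos.mpr (by have := hpos t; linarith)
  have hb : 0 < b := Real.sqrt_pos.mpr (by have := hpos 0; linarith)
  have ha2 : a ^ 2 = g t + ε := Real.sq_sqrt (by have := hpos t; linarith)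
  have hb2 : b ^ 2 = g 0 + ε := Real.sq_sqrt (by have := hpos 0; linarith)
  have hk : 0 ≤ k := by positivity
  obtain ⟨key1, key2⟩ := abs_le.mp key
  have e1 : a * b * a⁻¹ = b := by field_simp
  have e2 : a * b * b⁻¹ = a := by field_simp
  constructor
  · have h2 : b ≤ a * (1 + k * b) := by
      have := mul_le_mul_of_nonneg_left key2 (mul_pos ha hb).le
      nlinarith [e1, e2]
    rw [div_le_iff₀ (by positivity), ← hb2, ← ha2]
    calc b ^ 2 ≤ (a * (1 + k * b)) ^ 2 := by
          apply pow_le_pow_left₀ hb.le h2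
      _ = a ^ 2 * (1 + k * b) ^ 2 := by ring
  · intro hkb
    have h2 : a * (1 - k * b) ≤ b := by
      have := mul_le_mul_of_nonneg_left key1 (mul_pos ha hb).le
      nlinarith [e1, e2]
    rw [le_div_iff₀ (pow_pos (by linarith) 2), ← hb2, ← ha2]
    calc a ^ 2 * (1 - k * b) ^ 2 = (a * (1 - k * b)) ^ 2 := by ring
      _ ≤ b ^ 2 := by
          apply pow_le_pow_left₀ (by nlinarith) h2

private lemma lim_lower (g0 k gt : ℝ) (hk : 0 ≤ k)
    (hlow : ∀ ε : ℝ, 0 < ε → (g0 + ε) / (1 + k * Real.sqrt (g0 + ε)) ^ 2 ≤ gt + ε) :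
    g0 / (1 + k * Real.sqrt g0) ^ 2 ≤ gt := by
  set L : ℝ → ℝ := fun ε => (g0 + ε) / (1 + k * Real.sqrt (g0 + ε)) ^ 2 - ε with hL
  have hcont : ContinuousAt L 0 := by
    have hne : (1 + k * Real.sqrt (g0 + 0)) ^ 2 ≠ 0 := by positivity
    have c1 : ContinuousAt (fun ε : ℝ => g0 + ε) 0 := by fun_prop
    have c2 : ContinuousAt (fun ε : ℝ => (1 + k * Real.sqrt (g0 + ε)) ^ 2) 0 := by fun_prop
    exact ((c1.div c2 hne).sub continuousAt_id)
  have hT : Tendsto L (nhdsWithin 0 (Set.Ioi 0)) (nhds (g0 / (1 + k * Real.sqrt g0) ^ 2)) := by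
    have := (hcont.continuousWithinAt (s := Set.Ioi 0)).tendsto
    simpa [hL] using this
  refine le_of_tendsto hT ?_
  filter_upwards [self_mem_nhdsWithin] with ε hε
  have := hlow ε hε
  simp only [hL]
  linarith

private lemma lim_upper (g0 k gt : ℝ) (hlt : 0 < 1 - k * Real.sqrt g0)
    (hup : ∀ ε : ℝ, 0 < ε → k * Real.sqrt (g0 + ε) < 1 →
      gt + ε ≤ (g0 + ε) / (1 - k * Real.sqrt (g0 + ε)) ^ 2) :
    gt ≤ g0 / (1 - k * Real.sqrt g0) ^ 2 := by
  set U : ℝ → ℝ := fun ε => (g0 + ε) / (1 - k * Real.sqrt (g0 + ε)) ^ 2 with hU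
  have hφ : ContinuousAt (fun ε : ℝ => k * Real.sqrt (g0 + ε)) 0 := by fun_prop
  have hcont : ContinuousAt U 0 := by
    have hne : (1 - k * Real.sqrt (g0 + 0)) ^ 2 ≠ 0 := by
      simp only [add_zero]; positivity
    have c1 : ContinuousAt (fun ε : ℝ => g0 + ε) 0 := by fun_prop
    have c2 : ContinuousAt (fun ε : ℝ => (1 - k * Real.sqrt (g0 + ε)) ^ 2) 0 := by fun_prop
    exact c1.div c2 hne
  have hT : Tendsto U (nhdsWithin 0 (Set.Ioi 0)) (nhds (g0 / (1 - k * Real.sqrt g0) ^ 2)) := by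
    have := (hcont.continuousWithinAt (s := Set.Ioi 0)).tendsto
    simpa [hU] using this
  refine ge_of_tendsto hT ?_
  have hev : ∀ᶠ ε in nhdsWithin (0:ℝ) (Set.Ioi 0), k * Real.sqrt (g0 + ε) < 1 := by
    have h0 : k * Real.sqrt (g0 + 0) < 1 := by simpa using by linarith
    exact (hφ.tendsto.mono_left nhdsWithin_le_nhds).eventually_lt_const (by simpa using h0)
  filter_upwards [self_mem_nhdsWithin, hev] with ε hε hlt'
  have h1 := hup ε hε hlt'
  have h2 : (0:ℝ) < ε := hε
  simp only [hU]
  linarith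

/-- Proposition (nesterov-second-derivative): second-derivative control for
canonically self-concordant functions along a line. -/
theorem stmt_0 (g : ℝ → ℝ) (c : ℝ) (hg : Differentiable ℝ g)
    (hpos : ∀ t, 0 ≤ g t) (hc : 0 ≤ c)
    (hsc : ∀ t : ℝ, c * |t| * Real.sqrt (g 0) ≤ 1 →
      |deriv g t| ≤ 2 * c * (g t) ^ (3/2 : ℝ)) :
    ∀ t : ℝ, c * |t| * Real.sqrt (g 0) ≤ 1 →
      g 0 / (1 + c * |t| * Real.sqrt (g 0)) ^ 2 ≤ g t ∧
      (0 < 1 - c * |t| * Real.sqrt (g 0) →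
        g t ≤ g 0 / (1 - c * |t| * Real.sqrt (g 0)) ^ 2) := by
  intro t ht
  have hk : 0 ≤ c * |t| := by positivity
  have heps := fun (ε : ℝ) (hε : 0 < ε) =>
    nesterov_eps g c t ε hε hpos hc (nesterov_key g c hg hpos hc hsc t ht ε hε)
  constructor
  · have := lim_lower (g 0) (c * |t|) (g t) hk (fun ε hε => by
      simpa [mul_assoc] using (heps ε hε).1)
    simpa [mul_assoc] using this
  · intro hlt
    have := lim_upper (g 0) (c * |t|) (g t) (by simpa [mul_assoc] using hlt)
      (fun ε hε hb => (heps ε hε).2 (by simpa [mul_assoc] using hb))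
    simpa [mul_assoc] using this
end

section
/- Let g : ℝ → ℝ be differentiable and non-negative, let c ≥ 0 and T > 0. Suppose |g'(t)| ≤ c·√(g(0))·g(t) for all t with |t| ≤ T. Then for all t with |t| ≤ T, one has g(0)·exp(−c|t|√(g(0))) ≤ g(t) ≤ g(0)·exp(c|t|√(g(0))). -/
/-!
Gronwall's argument: `|g'| ≤ K g` with `K = c √(g 0)` says that `g e^{K s}` is nondecreasing and
`g e^{-K s}` is nonincreasing, and comparing their values at `0` and `t` gives both bounds for
`t ≥ 0`. Negative `t` reduces to this case by the reflection `s ↦ g (-s)`.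
-/

open Real Set

theorem monotoneOn_mul_exp_of_neg_mul_le_deriv {f : ℝ → ℝ} {s : Set ℝ} (hs : Convex ℝ s)
    (hf : Differentiable ℝ f) (K : ℝ) (h : ∀ x ∈ s, -(K * f x) ≤ deriv f x) :
    MonotoneOn (fun x => f x * exp (K * x)) s := by
  have hderiv : ∀ x, HasDerivAt (fun x => f x * exp (K * x))
      ((deriv f x + K * f x) * exp (K * x)) x := fun x =>
    ((hf x).hasDerivAt.fun_mul (hasDerivAt_const_mul K).exp).congr_deriv (by ring)
  refine monotoneOn_of_deriv_nonneg hs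
    (fun x _ => (hderiv x).continuousAt.continuousWithinAt)
    (fun x _ => (hderiv x).differentiableAt.differentiableWithinAt) fun x hx => ?_
  rw [(hderiv x).deriv]
  have := h x (interior_subset hx)
  exact mul_nonneg (by linarith) (exp_pos _).le

theorem antitoneOn_mul_exp_neg_of_deriv_le_mul {f : ℝ → ℝ} {s : Set ℝ} (hs : Convex ℝ s)
    (hf : Differentiable ℝ f) (K : ℝ) (h : ∀ x ∈ s, deriv f x ≤ K * f x) :
    AntitoneOn (fun x => f x * exp (-K * x)) s := by
  have hneg := monotoneOn_mul_exp_of_neg_mul_le_deriv hs hf.neg (-K) fun x hx => by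
    rw [deriv.neg', Pi.neg_apply]
    linarith [h x hx]
  intro x hx y hy hxy
  simpa using hneg hx hy hxy

theorem exp_neg_mul_le_and_le_exp_mul_of_abs_deriv_le {f : ℝ → ℝ} (hf : Differentiable ℝ f)
    {K t : ℝ} (ht : 0 ≤ t) (h : ∀ x ∈ Icc 0 t, |deriv f x| ≤ K * f x) :
    f 0 * exp (-(K * t)) ≤ f t ∧ f t ≤ f 0 * exp (K * t) := by
  have h0 : (0 : ℝ) ∈ Icc 0 t := left_mem_Icc.2 ht
  have htI : t ∈ Icc 0 t := right_mem_Icc.2 ht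
  have hlow : f 0 ≤ f t * exp (K * t) := by
    simpa using monotoneOn_mul_exp_of_neg_mul_le_deriv (convex_Icc 0 t) hf K
      (fun x hx => neg_le_of_abs_le (h x hx)) h0 htI ht
  have hup : f t * exp (-(K * t)) ≤ f 0 := by
    simpa using antitoneOn_mul_exp_neg_of_deriv_le_mul (convex_Icc 0 t) hf K
      (fun x hx => le_of_abs_le (h x hx)) h0 htI ht
  constructor
  · calc f 0 * exp (-(K * t)) ≤ f t * exp (K * t) * exp (-(K * t)) := by gcongr
      _ = f t := by rw [mul_assoc, ← exp_add, add_neg_cancel, exp_zero, mul_one]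
  · calc f t = f t * exp (-(K * t)) * exp (K * t) := by
          rw [mul_assoc, ← exp_add, neg_add_cancel, exp_zero, mul_one]
      _ ≤ f 0 * exp (K * t) := by gcongr

theorem exp_neg_mul_abs_le_and_le_exp_mul_abs_of_abs_deriv_le {f : ℝ → ℝ}
    (hf : Differentiable ℝ f) {K t : ℝ} (h : ∀ x ∈ uIcc 0 t, |deriv f x| ≤ K * f x) :
    f 0 * exp (-(K * |t|)) ≤ f t ∧ f t ≤ f 0 * exp (K * |t|) := by
  rcases le_total 0 t with ht | ht
  · rw [abs_of_nonneg ht]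
    exact exp_neg_mul_le_and_le_exp_mul_of_abs_deriv_le hf ht fun x hx =>
      h x (Icc_subset_uIcc hx)
  · rw [abs_of_nonpos ht]
    have hrefl := exp_neg_mul_le_and_le_exp_mul_of_abs_deriv_le (f := fun x => f (-x))
      (hf.comp differentiable_neg) (neg_nonneg.2 ht) fun x hx => by
        rw [deriv_comp_neg, abs_neg]
        exact h (-x) (mem_uIcc_of_ge (by linarith [hx.2]) (by linarith [hx.1]))
    simpa using hrefl

theorem stmt_1_general (g : ℝ → ℝ) (c T : ℝ) (hg : Differentiable ℝ g)
    (hsc : ∀ t : ℝ, |t| ≤ T → |deriv g t| ≤ c * Real.sqrt (g 0) * g t) :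
    ∀ t : ℝ, |t| ≤ T →
      g 0 * Real.exp (-(c * |t| * Real.sqrt (g 0))) ≤ g t ∧
      g t ≤ g 0 * Real.exp (c * |t| * Real.sqrt (g 0)) := by
  intro t ht
  have hbound := exp_neg_mul_abs_le_and_le_exp_mul_abs_of_abs_deriv_le hg
    (K := c * √(g 0)) fun x hx =>
      hsc x (le_trans (by simpa using abs_sub_left_of_mem_uIcc hx) ht)
  rwa [mul_right_comm c (√(g 0))] at hbound

/-- Proposition (bach-second-derivative): second-derivative control for
pseudo self-concordant functions along a line. -/
theorem stmt_1 (g : ℝ → ℝ) (c T : ℝ) (hg : Differentiable ℝ g)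
    (hpos : ∀ t, 0 ≤ g t) (hc : 0 ≤ c) (hT : 0 < T)
    (hsc : ∀ t : ℝ, |t| ≤ T → |deriv g t| ≤ c * Real.sqrt (g 0) * g t) :
    ∀ t : ℝ, |t| ≤ T →
      g 0 * Real.exp (-(c * |t| * Real.sqrt (g 0))) ≤ g t ∧
      g t ≤ g 0 * Real.exp (c * |t| * Real.sqrt (g 0)) :=
  stmt_1_general g c T hg hsc
end

section
/- Let g : [0,1] → ℝ be three times differentiable and convex with g''(0) > 0, and suppose |g'''(t)| ≤ S·g''(t) for all t ∈ [0,1] with S ≥ 0. Then for all t ∈ [0,1]: ((e^{−St} + St − 1)/S²)·g''(0) ≤ g(t) − g(0) − g'(0)·t ≤ ((e^{St} − St − 1)/S²)·g''(0). -/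
/-!
With `h = g''`, the hypothesis `|h'| ≤ S h` gives by Grönwall `e^{-St} h 0 ≤ h t ≤ e^{St} h 0`.
Integrating twice from `0`, i.e. comparing `g` with `g 0 + g' 0 t + φ_c(t) h 0` where
`φ_c'' = e^{ct}` and `φ_c 0 = φ_c' 0 = 0`, turns this into the bracket with `c = ∓S`.
-/

open Set Real

theorem ContDiffOn.hasDerivWithinAt_iteratedDerivWithin {𝕜 F : Type*} [NontriviallyNormedField 𝕜]
    [NormedAddCommGroup F] [NormedSpace 𝕜 F] {f : 𝕜 → F} {s : Set 𝕜} {x : 𝕜} {n : WithTop ℕ∞}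
    {m : ℕ} (hf : ContDiffOn 𝕜 n f s) (hmn : m < n) (hs : UniqueDiffOn 𝕜 s) (hx : x ∈ s) :
    HasDerivWithinAt (iteratedDerivWithin m f s) (iteratedDerivWithin (m + 1) f s x) s x := by
  rw [iteratedDerivWithin_succ]
  exact (hf.differentiableOn_iteratedDerivWithin hmn hs x hx).hasDerivWithinAt

section Comparison

variable {a b : ℝ}

theorem le_of_deriv_le_on_Icc {f f' g g' : ℝ → ℝ}
    (hf : ∀ x ∈ Icc a b, HasDerivWithinAt f (f' x) (Icc a b) x)
    (hg : ∀ x ∈ Icc a b, HasDerivWithinAt g (g' x) (Icc a b) x)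
    (ha : f a ≤ g a) (hle : ∀ x ∈ Icc a b, f' x ≤ g' x) :
    ∀ x ∈ Icc a b, f x ≤ g x :=
  image_le_of_deriv_right_le_deriv_boundary (HasDerivWithinAt.continuousOn hf)
    (fun x hx ↦ (hf x (Ico_subset_Icc_self hx)).mono_of_mem_nhdsWithin
      (Icc_mem_nhdsGE_of_mem hx))
    ha (HasDerivWithinAt.continuousOn hg)
    (fun x hx ↦ (hg x (Ico_subset_Icc_self hx)).mono_of_mem_nhdsWithin
      (Icc_mem_nhdsGE_of_mem hx))
    (fun x hx ↦ hle x (Ico_subset_Icc_self hx))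

theorem le_of_second_deriv_le_on_Icc {f f' f'' g g' g'' : ℝ → ℝ}
    (hf : ∀ x ∈ Icc a b, HasDerivWithinAt f (f' x) (Icc a b) x)
    (hf' : ∀ x ∈ Icc a b, HasDerivWithinAt f' (f'' x) (Icc a b) x)
    (hg : ∀ x ∈ Icc a b, HasDerivWithinAt g (g' x) (Icc a b) x)
    (hg' : ∀ x ∈ Icc a b, HasDerivWithinAt g' (g'' x) (Icc a b) x)
    (ha : f a ≤ g a) (ha' : f' a ≤ g' a) (hle : ∀ x ∈ Icc a b, f'' x ≤ g'' x) :
    ∀ x ∈ Icc a b, f x ≤ g x :=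
  le_of_deriv_le_on_Icc hf hg ha (le_of_deriv_le_on_Icc hf' hg' ha' hle)

theorem le_exp_mul_of_deriv_le_mul {f f' : ℝ → ℝ} {c : ℝ}
    (hf : ∀ x ∈ Icc a b, HasDerivWithinAt f (f' x) (Icc a b) x)
    (hle : ∀ x ∈ Icc a b, f' x ≤ c * f x) :
    ∀ x ∈ Icc a b, f x ≤ exp (c * (x - a)) * f a := by
  intro x hx
  have := le_gronwallBound_of_liminf_deriv_right_le (K := c) (ε := 0)
    (HasDerivWithinAt.continuousOn hf)
    (fun y hy r hr ↦ ((hf y (Ico_subset_Icc_self hy)).mono_of_mem_nhdsWithin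
      (Icc_mem_nhdsGE_of_mem hy)).liminf_right_slope_le hr)
    le_rfl (fun y hy ↦ (add_zero (c * f y)).symm ▸ hle y (Ico_subset_Icc_self hy)) x hx
  rwa [gronwallBound_ε0, mul_comm] at this

theorem exp_mul_le_of_mul_le_deriv {f f' : ℝ → ℝ} {c : ℝ}
    (hf : ∀ x ∈ Icc a b, HasDerivWithinAt f (f' x) (Icc a b) x)
    (hle : ∀ x ∈ Icc a b, c * f x ≤ f' x) :
    ∀ x ∈ Icc a b, exp (c * (x - a)) * f a ≤ f x := by
  intro x hx
  have := le_exp_mul_of_deriv_le_mul (f := -f) (f' := -f') (fun y hy ↦ (hf y hy).neg)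
    (fun y hy ↦ by simpa using hle y hy) x hx
  simpa using this

end Comparison

/-- `expRem c` solves `φ'' = exp (c * ·)` with `φ 0 = φ' 0 = 0`; `t ^ 2 / 2` is its limit as
`c → 0`. -/
noncomputable def expRem (c t : ℝ) : ℝ :=
  if c = 0 then t ^ 2 / 2 else (exp (c * t) - c * t - 1) / c ^ 2

noncomputable def expRemDeriv (c t : ℝ) : ℝ :=
  if c = 0 then t else (exp (c * t) - 1) / c

@[simp] theorem expRem_zero_right (c : ℝ) : expRem c 0 = 0 := by simp [expRem]

@[simp] theorem expRemDeriv_zero_right (c : ℝ) : expRemDeriv c 0 = 0 := by simp [expRemDeriv]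

theorem expRem_neg (c t : ℝ) :
    expRem (-c) t = if c = 0 then t ^ 2 / 2 else (exp (-(c * t)) + c * t - 1) / c ^ 2 := by
  simp only [expRem, neg_eq_zero, neg_mul, neg_sq, sub_neg_eq_add]

theorem hasDerivAt_expRem (c t : ℝ) : HasDerivAt (expRem c) (expRemDeriv c t) t := by
  unfold expRem expRemDeriv
  by_cases hc : c = 0
  · simp only [hc, ↓reduceIte]
    exact ((hasDerivAt_pow 2 t).div_const 2).congr_deriv (by ring)
  · simp only [hc, ↓reduceIte]
    refine ((((hasDerivAt_id' t).const_mul c).exp.sub ((hasDerivAt_id' t).const_mul c)).sub_const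
      1).div_const (c ^ 2) |>.congr_deriv ?_
    field_simp

theorem hasDerivAt_expRemDeriv (c t : ℝ) : HasDerivAt (expRemDeriv c) (exp (c * t)) t := by
  unfold expRemDeriv
  by_cases hc : c = 0
  · simpa [hc] using hasDerivAt_id' t
  · simp only [hc, ↓reduceIte]
    refine (((hasDerivAt_id' t).const_mul c).exp.sub_const 1).div_const c |>.congr_deriv ?_
    field_simp

theorem taylor_remainder_mem_Icc_of_exp_bounds {f f₁ f₂ : ℝ → ℝ} {a b c d : ℝ}
    (hf : ∀ x ∈ Icc a b, HasDerivWithinAt f (f₁ x) (Icc a b) x)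
    (hf₁ : ∀ x ∈ Icc a b, HasDerivWithinAt f₁ (f₂ x) (Icc a b) x)
    (hlow : ∀ x ∈ Icc a b, exp (c * (x - a)) * f₂ a ≤ f₂ x)
    (hup : ∀ x ∈ Icc a b, f₂ x ≤ exp (d * (x - a)) * f₂ a) :
    ∀ x ∈ Icc a b, f x - f a - f₁ a * (x - a) ∈
      Icc (expRem c (x - a) * f₂ a) (expRem d (x - a) * f₂ a) := by
  have hP : ∀ c, ∀ x ∈ Icc a b,
      HasDerivWithinAt (fun y ↦ f a + f₁ a * (y - a) + expRem c (y - a) * f₂ a)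
        (f₁ a + expRemDeriv c (x - a) * f₂ a) (Icc a b) x := fun c x _ ↦
    ((((hasDerivAt_id' x).sub_const a).const_mul (f₁ a)).const_add (f a) |>.add
      (((hasDerivAt_expRem c (x - a)).comp_sub_const x a).mul_const (f₂ a))).hasDerivWithinAt
      |>.congr_deriv (by ring)
  have hP' : ∀ c, ∀ x ∈ Icc a b, HasDerivWithinAt (fun y ↦ f₁ a + expRemDeriv c (y - a) * f₂ a)
      (exp (c * (x - a)) * f₂ a) (Icc a b) x := fun c x _ ↦
    (((hasDerivAt_expRemDeriv c (x - a)).comp_sub_const x a).mul_const (f₂ a)).const_add (f₁ a)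
      |>.hasDerivWithinAt
  intro x hx
  constructor
  · have := le_of_second_deriv_le_on_Icc (hP c) (hP' c) hf hf₁ (by simp) (by simp) hlow x hx
    linarith
  · have := le_of_second_deriv_le_on_Icc hf hf₁ (hP d) (hP' d) (by simp) (by simp) hup x hx
    linarith

theorem stmt_2_general (g : ℝ → ℝ) (S : ℝ)
    (hg : ContDiffOn ℝ 3 g (Set.Icc 0 1))
    (hsc : ∀ t ∈ Set.Icc (0:ℝ) 1,
      |iteratedDerivWithin 3 g (Set.Icc 0 1) t| ≤
        S * iteratedDerivWithin 2 g (Set.Icc 0 1) t) :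
    ∀ t ∈ Set.Icc (0:ℝ) 1,
      (if S = 0 then t ^ 2 / 2 else (Real.exp (-(S * t)) + S * t - 1) / S ^ 2) *
          iteratedDerivWithin 2 g (Set.Icc 0 1) 0
        ≤ g t - g 0 - iteratedDerivWithin 1 g (Set.Icc 0 1) 0 * t ∧
      g t - g 0 - iteratedDerivWithin 1 g (Set.Icc 0 1) 0 * t
        ≤ (if S = 0 then t ^ 2 / 2 else (Real.exp (S * t) - S * t - 1) / S ^ 2) *
          iteratedDerivWithin 2 g (Set.Icc 0 1) 0 := by
  have hderiv : ∀ m < 3, ∀ x ∈ Icc (0 : ℝ) 1, HasDerivWithinAt (iteratedDerivWithin m g (Icc 0 1))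
      (iteratedDerivWithin (m + 1) g (Icc 0 1) x) (Icc 0 1) x := fun m hm x hx ↦
    hg.hasDerivWithinAt_iteratedDerivWithin (by exact_mod_cast hm) (uniqueDiffOn_Icc one_pos) hx
  have hg₂_low := exp_mul_le_of_mul_le_deriv (c := -S) (hderiv 2 (by norm_num))
    fun x hx ↦ neg_mul S _ ▸ neg_le_of_abs_le (hsc x hx)
  have hg₂_up := le_exp_mul_of_deriv_le_mul (c := S) (hderiv 2 (by norm_num))
    fun x hx ↦ le_of_abs_le (hsc x hx)
  have hg₀ : ∀ x ∈ Icc (0 : ℝ) 1,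
      HasDerivWithinAt g (iteratedDerivWithin 1 g (Icc 0 1) x) (Icc 0 1) x := by
    simpa only [iteratedDerivWithin_zero] using hderiv 0 (by norm_num)
  intro t ht
  have := taylor_remainder_mem_Icc_of_exp_bounds hg₀ (hderiv 1 (by norm_num)) hg₂_low hg₂_up t ht
  simp only [sub_zero] at this
  rw [← expRem_neg]
  exact this

/-- Lemma (bach-1d): Taylor bracketing for pseudo self-concordant functions on [0,1].
For S = 0 the bracketing coefficients are interpreted as their limits t²/2. -/
theorem stmt_2 (g : ℝ → ℝ) (S : ℝ) (hS : 0 ≤ S)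
    (hg : ContDiffOn ℝ 3 g (Set.Icc 0 1))
    (hconv : ConvexOn ℝ (Set.Icc 0 1) g)
    (h0 : 0 < iteratedDerivWithin 2 g (Set.Icc 0 1) 0)
    (hsc : ∀ t ∈ Set.Icc (0:ℝ) 1,
      |iteratedDerivWithin 3 g (Set.Icc 0 1) t| ≤
        S * iteratedDerivWithin 2 g (Set.Icc 0 1) t) :
    ∀ t ∈ Set.Icc (0:ℝ) 1,
      (if S = 0 then t ^ 2 / 2 else (Real.exp (-(S * t)) + S * t - 1) / S ^ 2) *
          iteratedDerivWithin 2 g (Set.Icc 0 1) 0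
        ≤ g t - g 0 - iteratedDerivWithin 1 g (Set.Icc 0 1) 0 * t ∧
      g t - g 0 - iteratedDerivWithin 1 g (Set.Icc 0 1) 0 * t
        ≤ (if S = 0 then t ^ 2 / 2 else (Real.exp (S * t) - S * t - 1) / S ^ 2) *
          iteratedDerivWithin 2 g (Set.Icc 0 1) 0 :=
  stmt_2_general g S hg hsc
end

section
/- Let g : [0,1] → ℝ be three times differentiable and convex with g''(0) > 0, and suppose |g'''(t)| ≤ (S/(1−t))·g''(t) for all t ∈ [0,1) with S ≥ 0. Then g(1) − g(0) − g'(0) ≥ g''(0)/(2+S), and if moreover S < 2 then g(1) − g(0) − g'(0) ≤ g''(0)/(2−S). -/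
/-!
Write `h = g''`. The hypothesis makes `h t * (1 - t) ^ (-S)` nondecreasing and
`h t * (1 - t) ^ S` nonincreasing on `[0, 1)`, so `h 0 * (1 - t) ^ S ≤ h t ≤ h 0 * (1 - t) ^ (-S)`.
Taylor's formula with integral remainder gives `g 1 - g 0 - g' 0 = ∫ t in 0..1, (1 - t) * h t`,
and integrating the two bounds against the weight `1 - t` yields `h 0 / (2 + S)` and
`h 0 / (2 - S)`.
-/

open Set Real intervalIntegral

theorem taylor_integral_remainder_one {f : ℝ → ℝ} {a b : ℝ} (hab : a ≤ b)
    (hf : ContDiffOn ℝ 2 f (Icc a b)) :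
    f b - f a - (b - a) * iteratedDerivWithin 1 f (Icc a b) a =
      ∫ t in a..b, (b - t) * iteratedDerivWithin 2 f (Icc a b) t := by
  have h := taylor_integral_remainder (n := 1) (x₀ := a) (x := b) (by rwa [uIcc_of_le hab])
  simp only [uIcc_of_le hab, taylorWithinEval_succ, taylor_within_zero_eval] at h
  simpa [sub_sub] using h

theorem hasDerivAt_iteratedDerivWithin_Icc {f : ℝ → ℝ} {n : WithTop ℕ∞} {a b x : ℝ} {m : ℕ}
    (hf : ContDiffOn ℝ n f (Icc a b)) (hm : m < n) (hx : x ∈ Ioo a b) :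
    HasDerivAt (iteratedDerivWithin m f (Icc a b)) (iteratedDerivWithin (m + 1) f (Icc a b) x) x := by
  have hd := hf.differentiableOn_iteratedDerivWithin hm
    (uniqueDiffOn_Icc (hx.1.trans hx.2)) x (Ioo_subset_Icc_self hx)
  rw [iteratedDerivWithin_succ]
  exact hd.hasDerivWithinAt.hasDerivAt (Icc_mem_nhds hx.1 hx.2)

theorem monotoneOn_mul_sub_rpow {h h' : ℝ → ℝ} {a b p : ℝ} (hc : ContinuousOn h (Ico a b))
    (hd : ∀ t ∈ Ioo a b, HasDerivAt h (h' t) t) (hle : ∀ t ∈ Ioo a b, p / (b - t) * h t ≤ h' t) :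
    MonotoneOn (fun t => h t * (b - t) ^ p) (Ico a b) := by
  have hw : ∀ t ∈ Ioo a b, HasDerivAt (fun t => (b - t) ^ p) (-1 * p * (b - t) ^ (p - 1)) t :=
    fun t ht => ((hasDerivAt_id t).const_sub b).rpow_const (Or.inl (sub_ne_zero.2 ht.2.ne'))
  refine monotoneOn_of_hasDerivWithinAt_nonneg
    (f' := fun t => h' t * (b - t) ^ p + h t * (-1 * p * (b - t) ^ (p - 1))) (convex_Ico a b) ?_ ?_ ?_
  · exact hc.mul fun t ht => ((continuousAt_const.sub continuousAt_id).rpow_const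
      (Or.inl (sub_ne_zero.2 ht.2.ne'))).continuousWithinAt
  · rw [interior_Ico]
    exact fun t ht => ((hd t ht).mul (hw t ht)).hasDerivWithinAt
  · rw [interior_Ico]
    intro t ht
    have hbt : 0 < b - t := sub_pos.2 ht.2
    have key : h' t * (b - t) ^ p + h t * (-1 * p * (b - t) ^ (p - 1)) =
        (b - t) ^ p * (h' t - p / (b - t) * h t) := by
      rw [rpow_sub_one hbt.ne']; ring
    rw [key]
    exact mul_nonneg (rpow_nonneg hbt.le p) (sub_nonneg.2 (hle t ht))

section GrowthBounds

variable {h h' : ℝ → ℝ} {S : ℝ}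

theorem mul_one_sub_rpow_le (hc : ContinuousOn h (Ico 0 1))
    (hd : ∀ t ∈ Ioo 0 1, HasDerivAt h (h' t) t) (hle : ∀ t ∈ Ioo 0 1, -(S / (1 - t) * h t) ≤ h' t)
    {t : ℝ} (ht : t ∈ Ico 0 1) : h 0 * (1 - t) ^ S ≤ h t := by
  have hmono := monotoneOn_mul_sub_rpow (p := -S) hc hd fun s hs => by
    simpa [neg_div, neg_mul] using hle s hs
  have := hmono (left_mem_Ico.2 one_pos) ht ht.1
  have hpos : 0 < (1 - t) ^ S := rpow_pos_of_pos (sub_pos.2 ht.2) S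
  simp only [sub_zero, one_rpow, mul_one, rpow_neg (sub_pos.2 ht.2).le, ← div_eq_mul_inv] at this
  exact (le_div_iff₀ hpos).1 this

theorem le_mul_one_sub_rpow_neg (hc : ContinuousOn h (Ico 0 1))
    (hd : ∀ t ∈ Ioo 0 1, HasDerivAt h (h' t) t) (hle : ∀ t ∈ Ioo 0 1, h' t ≤ S / (1 - t) * h t)
    {t : ℝ} (ht : t ∈ Ico 0 1) : h t ≤ h 0 * (1 - t) ^ (-S) := by
  have hmono := monotoneOn_mul_sub_rpow (h := -h) (p := S) hc.neg (fun s hs => (hd s hs).neg)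
    fun s hs => by simpa using hle s hs
  have := hmono (left_mem_Ico.2 one_pos) ht ht.1
  have hpos : 0 < (1 - t) ^ S := rpow_pos_of_pos (sub_pos.2 ht.2) S
  simp only [Pi.neg_apply, sub_zero, one_rpow, mul_one, neg_mul, neg_le_neg_iff] at this
  rw [rpow_neg (sub_pos.2 ht.2).le, ← div_eq_mul_inv, le_div_iff₀ hpos]
  exact this

end GrowthBounds

theorem integral_one_sub_rpow {r : ℝ} (hr : -1 < r) :
    ∫ t in (0:ℝ)..1, (1 - t) ^ r = 1 / (r + 1) := by
  rw [integral_comp_sub_left (fun t => t ^ r), integral_rpow (Or.inl hr)]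
  norm_num [(by linarith : r + 1 ≠ 0)]

theorem intervalIntegrable_one_sub_rpow {r : ℝ} (hr : -1 < r) :
    IntervalIntegrable (fun t => (1 - t) ^ r) MeasureTheory.volume 0 1 := by
  simpa using ((intervalIntegrable_rpow' hr (a := 0) (b := 1)).comp_sub_left 1).symm

section WeightedIntegral

variable {h : ℝ → ℝ} {c p : ℝ}

theorem integral_one_sub_mul_rpow (hp : -2 < p) :
    ∫ t in (0:ℝ)..1, c * (1 - t) ^ (1 + p) = c / (2 + p) := by
  rw [integral_const_mul, integral_one_sub_rpow (by linarith)]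
  field_simp
  ring

theorem div_two_add_le_integral (hp : -2 < p) (hh : IntervalIntegrable h MeasureTheory.volume 0 1)
    (hle : ∀ t ∈ Ioo (0:ℝ) 1, c * (1 - t) ^ p ≤ h t) :
    c / (2 + p) ≤ ∫ t in (0:ℝ)..1, (1 - t) * h t := by
  rw [← integral_one_sub_mul_rpow hp]
  refine integral_mono_on_of_le_Ioo zero_le_one
    ((intervalIntegrable_one_sub_rpow (by linarith)).const_mul c)
    (hh.continuousOn_mul (by fun_prop)) fun t ht => ?_
  rw [rpow_add (sub_pos.2 ht.2), rpow_one, mul_left_comm]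
  exact mul_le_mul_of_nonneg_left (hle t ht) (sub_pos.2 ht.2).le

theorem integral_le_div_two_add (hp : -2 < p) (hh : IntervalIntegrable h MeasureTheory.volume 0 1)
    (hle : ∀ t ∈ Ioo (0:ℝ) 1, h t ≤ c * (1 - t) ^ p) :
    ∫ t in (0:ℝ)..1, (1 - t) * h t ≤ c / (2 + p) := by
  rw [← integral_one_sub_mul_rpow hp]
  refine integral_mono_on_of_le_Ioo zero_le_one (hh.continuousOn_mul (by fun_prop))
    ((intervalIntegrable_one_sub_rpow (by linarith)).const_mul c) fun t ht => ?_
  rw [rpow_add (sub_pos.2 ht.2), rpow_one, mul_left_comm]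
  exact mul_le_mul_of_nonneg_left (hle t ht) (sub_pos.2 ht.2).le

end WeightedIntegral

theorem stmt_3_general (g : ℝ → ℝ) (S : ℝ) (hS : 0 ≤ S)
    (hg : ContDiffOn ℝ 3 g (Set.Icc 0 1))
    (hsc : ∀ t ∈ Set.Ico (0:ℝ) 1,
      |iteratedDerivWithin 3 g (Set.Icc 0 1) t| ≤
        S / (1 - t) * iteratedDerivWithin 2 g (Set.Icc 0 1) t) :
    iteratedDerivWithin 2 g (Set.Icc 0 1) 0 / (2 + S)
      ≤ g 1 - g 0 - iteratedDerivWithin 1 g (Set.Icc 0 1) 0 ∧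
    (S < 2 →
      g 1 - g 0 - iteratedDerivWithin 1 g (Set.Icc 0 1) 0
        ≤ iteratedDerivWithin 2 g (Set.Icc 0 1) 0 / (2 - S)) := by
  have hcont : ContinuousOn (iteratedDerivWithin 2 g (Icc 0 1)) (Icc 0 1) :=
    hg.continuousOn_iteratedDerivWithin (by norm_num) (uniqueDiffOn_Icc one_pos)
  have hint := hcont.intervalIntegrable_of_Icc (μ := MeasureTheory.volume) zero_le_one
  have hderiv (t : ℝ) (ht : t ∈ Ioo (0:ℝ) 1) :=
    hasDerivAt_iteratedDerivWithin_Icc (m := 2) hg (by norm_num) ht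
  have hsc' (t : ℝ) (ht : t ∈ Ioo (0:ℝ) 1) := abs_le.1 (hsc t (Ioo_subset_Ico_self ht))
  have htaylor := taylor_integral_remainder_one zero_le_one (hg.of_le (by norm_num))
  rw [sub_zero, one_mul] at htaylor
  rw [htaylor]
  refine ⟨div_two_add_le_integral (by linarith) hint fun t ht => ?_, fun hS2 => ?_⟩
  · exact mul_one_sub_rpow_le (hcont.mono Ico_subset_Icc_self) hderiv (fun s hs => (hsc' s hs).1)
      (Ioo_subset_Ico_self ht)
  · rw [sub_eq_add_neg]
    refine integral_le_div_two_add (by linarith) hint fun t ht => ?_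
    exact le_mul_one_sub_rpow_neg (hcont.mono Ico_subset_Icc_self) hderiv
      (fun s hs => (hsc' s hs).2) (Ioo_subset_Ico_self ht)

/-- Lemma (aux-1d), value at t = 1: bracketing under |g'''(t)| ≤ (S/(1−t))·g''(t). -/
theorem stmt_3 (g : ℝ → ℝ) (S : ℝ) (hS : 0 ≤ S)
    (hg : ContDiffOn ℝ 3 g (Set.Icc 0 1))
    (hconv : ConvexOn ℝ (Set.Icc 0 1) g)
    (h0 : 0 < iteratedDerivWithin 2 g (Set.Icc 0 1) 0)
    (hsc : ∀ t ∈ Set.Ico (0:ℝ) 1,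
      |iteratedDerivWithin 3 g (Set.Icc 0 1) t| ≤
        S / (1 - t) * iteratedDerivWithin 2 g (Set.Icc 0 1) t) :
    iteratedDerivWithin 2 g (Set.Icc 0 1) 0 / (2 + S)
      ≤ g 1 - g 0 - iteratedDerivWithin 1 g (Set.Icc 0 1) 0 ∧
    (S < 2 →
      g 1 - g 0 - iteratedDerivWithin 1 g (Set.Icc 0 1) 0
        ≤ iteratedDerivWithin 2 g (Set.Icc 0 1) 0 / (2 - S)) :=
  stmt_3_general g S hS hg hsc
end

section
/- Let g : [0,1] → ℝ be three times differentiable and convex with g''(0) > 0 and suppose, for some S ≥ 1, |g'''(t)| ≤ S·g''(t)/(1−St) for all 0 ≤ t < 1/S. Then g''(0)/(3S²) ≤ g(1/S) − g(0) − g'(0)/S ≤ g''(0)/S². -/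
/-!
Write `f = g''` and `c = 1 / S`. The hypothesis says `|f'| (1 - S t) ≤ S f`, so `f (1 - S t)` is
nonincreasing and `f / (1 - S t)` nondecreasing on `[0, c)`, whence
`f 0 (1 - S t) ≤ f t ≤ f 0 / (1 - S t)`. Integrating these bounds against Taylor's kernel,
`g c - g 0 - c g'(0) = ∫₀ᶜ (c - t) f t dt` with `c - t = (1 - S t) / S`, gives both estimates.
-/

open Set Topology

theorem ContDiffOn.hasDerivAt_iteratedDerivWithin {f : ℝ → ℝ} {s : Set ℝ} {n : WithTop ℕ∞}
    {m : ℕ} {t : ℝ} (hf : ContDiffOn ℝ n f s) (hmn : m < n) (hs : UniqueDiffOn ℝ s) (ht : s ∈ 𝓝 t) :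
    HasDerivAt (iteratedDerivWithin m f s) (iteratedDerivWithin (m + 1) f s t) t := by
  rw [iteratedDerivWithin_succ]
  exact ((hf.differentiableOn_iteratedDerivWithin hmn hs) t
    (mem_of_mem_nhds ht)).hasDerivWithinAt.hasDerivAt ht

theorem integral_sub_mul_eq_taylor_remainder {g g' g'' : ℝ → ℝ} {a b : ℝ} (hab : a ≤ b)
    (hg : ContinuousOn g (Icc a b)) (hg' : ContinuousOn g' (Icc a b))
    (hderiv : ∀ t ∈ Ioo a b, HasDerivAt g (g' t) t)
    (hderiv' : ∀ t ∈ Ioo a b, HasDerivAt g' (g'' t) t)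
    (hint : IntervalIntegrable g'' MeasureTheory.volume a b) :
    ∫ t in a..b, (b - t) * g'' t = g b - g a - (b - a) * g' a := by
  have hantideriv : ∀ t ∈ Ioo a b,
      HasDerivAt (fun t => g t + (b - t) * g' t) ((b - t) * g'' t) t := fun t ht =>
    ((hderiv t ht).add (((hasDerivAt_id' t).const_sub b).mul (hderiv' t ht))).congr_deriv
      (by ring)
  have hFcont : ContinuousOn (fun t => g t + (b - t) * g' t) (Icc a b) :=
    hg.add ((continuousOn_const.sub continuousOn_id).mul hg')
  rw [intervalIntegral.integral_eq_sub_of_hasDerivAt_of_le hab hFcont hantideriv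
    (hint.continuousOn_mul (g := fun t => b - t) (by fun_prop))]
  ring

theorem hasDerivAt_one_sub_mul (S t : ℝ) : HasDerivAt (fun t : ℝ => 1 - S * t) (-S) t := by
  simpa using ((hasDerivAt_id t).const_mul S).const_sub 1

section OneSubMul

variable {f f' : ℝ → ℝ} {S a b : ℝ}

theorem antitoneOn_mul_one_sub_mul (hf : ContinuousOn f (Icc a b))
    (hf' : ∀ t ∈ Ioo a b, HasDerivAt f (f' t) t)
    (hle : ∀ t ∈ Ioo a b, f' t * (1 - S * t) ≤ S * f t) :
    AntitoneOn (fun t => f t * (1 - S * t)) (Icc a b) := by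
  refine antitoneOn_of_hasDerivWithinAt_nonpos (convex_Icc a b) (hf.mul (by fun_prop))
    (f' := fun t => f' t * (1 - S * t) + f t * -S) (fun t ht => ?_) (fun t ht => ?_)
  all_goals rw [interior_Icc] at ht
  · exact ((hf' t ht).mul (hasDerivAt_one_sub_mul S t)).hasDerivWithinAt
  · linarith [hle t ht]

theorem monotoneOn_div_one_sub_mul (hf : ContinuousOn f (Ico a b))
    (hf' : ∀ t ∈ Ioo a b, HasDerivAt f (f' t) t)
    (hpos : ∀ t ∈ Ico a b, 0 < 1 - S * t)
    (hge : ∀ t ∈ Ioo a b, -(S * f t) ≤ f' t * (1 - S * t)) :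
    MonotoneOn (fun t => f t / (1 - S * t)) (Ico a b) := by
  refine monotoneOn_of_hasDerivWithinAt_nonneg (convex_Ico a b)
    (hf.div (by fun_prop) fun t ht => (hpos t ht).ne')
    (f' := fun t => (f' t * (1 - S * t) - f t * -S) / (1 - S * t) ^ 2)
    (fun t ht => ?_) (fun t ht => ?_)
  all_goals rw [interior_Ico] at ht
  · exact ((hf' t ht).div (hasDerivAt_one_sub_mul S t)
      (hpos t (Ioo_subset_Ico_self ht)).ne').hasDerivWithinAt
  · exact div_nonneg (by linarith [hge t ht]) (sq_nonneg _)

theorem apply_mul_one_sub_mul_le_apply_zero (hf : ContinuousOn f (Icc 0 (1 / S)))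
    (hf' : ∀ t ∈ Ioo 0 (1 / S), HasDerivAt f (f' t) t)
    (hbound : ∀ t ∈ Ioo 0 (1 / S), |f' t * (1 - S * t)| ≤ S * f t) {t : ℝ}
    (ht : t ∈ Icc 0 (1 / S)) :
    f t * (1 - S * t) ≤ f 0 := by
  have hanti := antitoneOn_mul_one_sub_mul hf hf' fun s hs => (abs_le.1 (hbound s hs)).2
  simpa using hanti (left_mem_Icc.2 (ht.1.trans ht.2)) ht ht.1

theorem apply_zero_mul_one_sub_mul_le_apply (hS : 0 < S) (hf : ContinuousOn f (Icc 0 (1 / S)))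
    (hf' : ∀ t ∈ Ioo 0 (1 / S), HasDerivAt f (f' t) t)
    (hbound : ∀ t ∈ Ioo 0 (1 / S), |f' t * (1 - S * t)| ≤ S * f t) {t : ℝ}
    (ht : t ∈ Ico 0 (1 / S)) :
    f 0 * (1 - S * t) ≤ f t := by
  have hpos : ∀ s ∈ Ico 0 (1 / S), 0 < 1 - S * s := fun s hs => by
    have := (lt_div_iff₀' hS).1 hs.2
    linarith
  have hmono := monotoneOn_div_one_sub_mul (hf.mono Ico_subset_Icc_self) hf' hpos fun s hs =>
    (abs_le.1 (hbound s hs)).1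
  have := hmono (left_mem_Ico.2 (ht.1.trans_lt ht.2)) ht ht.1
  simpa [le_div_iff₀ (hpos t ht)] using this

theorem le_integral_sub_mul (hS : 0 < S) (hf : ContinuousOn f (Icc 0 (1 / S)))
    (hlow : ∀ t ∈ Ioo 0 (1 / S), f 0 * (1 - S * t) ≤ f t) :
    f 0 / (3 * S ^ 2) ≤ ∫ t in 0..1 / S, (1 / S - t) * f t := by
  have hkernel : ∫ t in (0 : ℝ)..1 / S, f 0 * S * (1 / S - t) ^ 2 = f 0 / (3 * S ^ 2) := by
    rw [intervalIntegral.integral_const_mul,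
      intervalIntegral.integral_comp_sub_left (fun t => t ^ 2), sub_self, sub_zero, integral_pow,
      div_pow, one_pow]
    field_simp
    ring
  rw [← hkernel]
  refine intervalIntegral.integral_mono_on_of_le_Ioo (by positivity)
    (Continuous.intervalIntegrable (by fun_prop) _ _)
    ((ContinuousOn.mul (by fun_prop) hf).intervalIntegrable_of_Icc (by positivity))
    fun t ht => ?_
  have h1 : 1 - S * t = S * (1 / S - t) := by field_simp
  have h2 : 0 ≤ 1 / S - t := sub_nonneg.2 ht.2.le
  calc f 0 * S * (1 / S - t) ^ 2 = (1 / S - t) * (f 0 * (1 - S * t)) := by rw [h1]; ring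
    _ ≤ (1 / S - t) * f t := mul_le_mul_of_nonneg_left (hlow t ht) h2

theorem integral_sub_mul_le (hS : 0 < S) (hf : ContinuousOn f (Icc 0 (1 / S)))
    (hup : ∀ t ∈ Ioo 0 (1 / S), f t * (1 - S * t) ≤ f 0) :
    ∫ t in 0..1 / S, (1 / S - t) * f t ≤ f 0 / S ^ 2 := by
  have hconst : ∫ _ in (0 : ℝ)..1 / S, f 0 / S = f 0 / S ^ 2 := by
    rw [intervalIntegral.integral_const, smul_eq_mul]
    field_simp
    ring
  rw [← hconst]
  refine intervalIntegral.integral_mono_on_of_le_Ioo (by positivity)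
    ((ContinuousOn.mul (by fun_prop) hf).intervalIntegrable_of_Icc (by positivity)) (by simp)
    fun t ht => ?_
  rw [le_div_iff₀ hS]
  calc (1 / S - t) * f t * S = f t * (1 - S * t) := by field_simp
    _ ≤ f 0 := hup t ht

end OneSubMul

theorem stmt_4_general (g : ℝ → ℝ) (S : ℝ) (hS : 1 ≤ S)
    (hg : ContDiffOn ℝ 3 g (Set.Icc 0 1))
    (hsc : ∀ t : ℝ, 0 ≤ t → t < 1 / S →
      |iteratedDerivWithin 3 g (Set.Icc 0 1) t| ≤
        S * iteratedDerivWithin 2 g (Set.Icc 0 1) t / (1 - S * t)) :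
    iteratedDerivWithin 2 g (Set.Icc 0 1) 0 / (3 * S ^ 2)
      ≤ g (1 / S) - g 0 - iteratedDerivWithin 1 g (Set.Icc 0 1) 0 / S ∧
    g (1 / S) - g 0 - iteratedDerivWithin 1 g (Set.Icc 0 1) 0 / S
      ≤ iteratedDerivWithin 2 g (Set.Icc 0 1) 0 / S ^ 2 := by
  have hS0 : 0 < S := one_pos.trans_le hS
  set F : ℕ → ℝ → ℝ := fun k => iteratedDerivWithin k g (Icc 0 1)
  have hsub : Icc 0 (1 / S) ⊆ Icc 0 1 := Icc_subset_Icc_right ((div_le_one hS0).2 hS)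
  have hcont : ∀ k ≤ 2, ContinuousOn (F k) (Icc 0 (1 / S)) := fun k hk =>
    (hg.continuousOn_iteratedDerivWithin (by norm_cast; omega)
      (uniqueDiffOn_Icc one_pos)).mono hsub
  have hderiv : ∀ k < 3, ∀ t ∈ Ioo 0 (1 / S), HasDerivAt (F k) (F (k + 1) t) t := fun k hk t ht =>
    hg.hasDerivAt_iteratedDerivWithin (by norm_cast) (uniqueDiffOn_Icc one_pos)
      (Icc_mem_nhds ht.1 (ht.2.trans_le ((div_le_one hS0).2 hS)))
  have hbound : ∀ t ∈ Ioo 0 (1 / S), |F 3 t * (1 - S * t)| ≤ S * F 2 t := fun t ht => by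
    have hpos : 0 < 1 - S * t := by linarith [(lt_div_iff₀' hS0).1 ht.2]
    rw [abs_mul, abs_of_pos hpos, ← le_div_iff₀ hpos]
    exact hsc t ht.1.le ht.2
  have htaylor : g (1 / S) - g 0 - F 1 0 / S = ∫ t in 0..1 / S, (1 / S - t) * F 2 t := by
    rw [integral_sub_mul_eq_taylor_remainder (by positivity) (hcont 0 (by norm_num))
      (hcont 1 (by norm_num)) (hderiv 0 (by norm_num)) (hderiv 1 (by norm_num))
      ((hcont 2 le_rfl).intervalIntegrable_of_Icc (by positivity))]
    simp only [F, iteratedDerivWithin_zero]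
    ring
  rw [htaylor]
  exact ⟨le_integral_sub_mul hS0 (hcont 2 le_rfl) fun t ht =>
      apply_zero_mul_one_sub_mul_le_apply hS0 (hcont 2 le_rfl) (hderiv 2 (by norm_num)) hbound
        (Ioo_subset_Ico_self ht),
    integral_sub_mul_le hS0 (hcont 2 le_rfl) fun t ht =>
      apply_mul_one_sub_mul_le_apply_zero (hcont 2 le_rfl) (hderiv 2 (by norm_num)) hbound
        (Ioo_subset_Icc_self ht)⟩

/-- Lemma (mine-1d), value at t = 1/S: bracketing under
|g'''(t)| ≤ S·g''(t)/(1−St) on [0, 1/S). -/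
theorem stmt_4 (g : ℝ → ℝ) (S : ℝ) (hS : 1 ≤ S)
    (hg : ContDiffOn ℝ 3 g (Set.Icc 0 1))
    (hconv : ConvexOn ℝ (Set.Icc 0 1) g)
    (h0 : 0 < iteratedDerivWithin 2 g (Set.Icc 0 1) 0)
    (hsc : ∀ t : ℝ, 0 ≤ t → t < 1 / S →
      |iteratedDerivWithin 3 g (Set.Icc 0 1) t| ≤
        S * iteratedDerivWithin 2 g (Set.Icc 0 1) t / (1 - S * t)) :
    iteratedDerivWithin 2 g (Set.Icc 0 1) 0 / (3 * S ^ 2)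
      ≤ g (1 / S) - g 0 - iteratedDerivWithin 1 g (Set.Icc 0 1) 0 / S ∧
    g (1 / S) - g 0 - iteratedDerivWithin 1 g (Set.Icc 0 1) 0 / S
      ≤ iteratedDerivWithin 2 g (Set.Icc 0 1) 0 / S ^ 2 :=
  stmt_4_general g S hS hg hsc
end

section
/- Suppose ψ : I → ℝ is strictly convex, three times differentiable and satisfies |ψ'''(u)| ≤ c·(ψ''(u))^{3/2} on an open interval I, with ψ'' > 0 on I. Let φ = ψ* be its Fenchel conjugate, assumed three times differentiable on the interior of its domain. Then φ also satisfies |φ'''(t)| ≤ c·(φ''(t))^{3/2} at every point t where φ'(t) ∈ I; moreover φ''(ψ'(u))·ψ''(u) = 1 whenever t = ψ'(u). -/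
/-!
At `t = ψ'(u)` the supremum defining `φ` is attained at `u`, so near `t` we have
`φ(s) = s·G(s) - ψ(G(s))` for a local inverse `G` of `ψ'`. The envelope theorem gives `φ' = G`,
hence `φ'' = 1/ψ''∘G` and `φ''' = -ψ'''∘G/(ψ''∘G)³`, and the bound transfers because
`(ψ'')^{3/2}/(ψ'')³ = (1/ψ'')^{3/2}`. Every `t` in the domain of `φ` with `φ'(t) ∈ I` is of this
form: the gradient inequality for the convex function `φ` at `t` makes `φ'(t)` a maximiser of
`u ↦ t·u - ψ(u)`, so `ψ'(φ'(t)) = t`. Outside its domain `φ` takes the junk value `0` on a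
half-line ending at `t`, so its derivatives at `t` vanish.
-/

open Filter Topology Set

section IteratedDeriv

variable {𝕜 : Type*} [NontriviallyNormedField 𝕜] {F : Type*} [NormedAddCommGroup F]
  [NormedSpace 𝕜 F]

lemma iteratedDeriv_two_eq (f : 𝕜 → F) : iteratedDeriv 2 f = deriv (deriv f) := by
  rw [iteratedDeriv_succ, iteratedDeriv_one]

lemma iteratedDeriv_three_eq (f : 𝕜 → F) : iteratedDeriv 3 f = deriv (deriv (deriv f)) := by
  rw [iteratedDeriv_succ, iteratedDeriv_two_eq]

lemma ContDiffAt.continuousAt_iteratedDeriv {f : 𝕜 → F} {a : 𝕜} {n : WithTop ℕ∞} {k : ℕ}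
    (hf : ContDiffAt 𝕜 n f a) (hk : k ≤ n) : ContinuousAt (iteratedDeriv k f) a :=
  (continuous_eval_const _).continuousAt.comp (hf.continuousAt_iteratedFDeriv hk)

lemma iteratedDeriv_eq_zero_of_eqOn_zero {f : 𝕜 → F} {U : Set 𝕜} {a : 𝕜} {n : WithTop ℕ∞}
    {k : ℕ} (hU : IsOpen U) (hfU : EqOn f 0 U) (ha : a ∈ closure U)
    (hf : ContDiffAt 𝕜 n f a) (hk : k ≤ n) : iteratedDeriv k f a = 0 := by
  have hderU : EqOn (iteratedDeriv k f) 0 U := fun s hs => by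
    simpa using ((hfU.eventuallyEq_of_mem (hU.mem_nhds hs)).iteratedDeriv k).eq_of_nhds
  have hsub : iteratedDeriv k f '' U ⊆ {0} := image_subset_iff.2 fun s hs => hderU hs
  simpa using closure_mono hsub
    ((hf.continuousAt_iteratedDeriv hk).continuousWithinAt.mem_closure_image ha)

end IteratedDeriv

section LocalInverse

lemma ContDiffAt.exists_localInverse {𝕂 : Type*} [RCLike 𝕂] {f : 𝕂 → 𝕂} {f' a : 𝕂}
    {n : WithTop ℕ∞} (hf : ContDiffAt 𝕂 n f a) (hn : n ≠ 0) (hf' : HasDerivAt f f' a)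
    (hf'0 : f' ≠ 0) :
    ∃ g : 𝕂 → 𝕂, g (f a) = a ∧ ContDiffAt 𝕂 n g (f a) ∧ ∀ᶠ s in 𝓝 (f a), f (g s) = s :=
  ⟨_, hf.localInverse_apply_image (hf'.hasFDerivAt_equiv hf'0) hn, hf.to_localInverse _ hn,
    (hf.hasStrictFDerivAt' (hf'.hasFDerivAt_equiv hf'0) hn).eventually_right_inverse⟩

variable {𝕜 : Type*} [NontriviallyNormedField 𝕜] {f g : 𝕜 → 𝕜} {b : 𝕜}

lemma eventually_hasDerivAt_of_local_left_inverse (hg : ∀ᶠ s in 𝓝 b, ContinuousAt g s)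
    (hfg : ∀ᶠ s in 𝓝 b, f (g s) = s)
    (hf : ∀ᶠ s in 𝓝 b, HasDerivAt f (deriv f (g s)) (g s) ∧ deriv f (g s) ≠ 0) :
    ∀ᶠ s in 𝓝 b, HasDerivAt g (deriv f (g s))⁻¹ s := by
  filter_upwards [hg, hfg.eventually_nhds, hf] with s hgs hfgs ⟨hfs, hfs0⟩
  exact hfs.of_local_left_inverse hgs hfs0 hfgs

lemma deriv_deriv_of_local_left_inverse {f'' : 𝕜}
    (hg : ∀ᶠ s in 𝓝 b, HasDerivAt g (deriv f (g s))⁻¹ s)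
    (hf' : HasDerivAt (deriv f) f'' (g b)) (hf'0 : deriv f (g b) ≠ 0) :
    deriv (deriv g) b = -f'' / deriv f (g b) ^ 3 := by
  have hderiv : deriv g =ᶠ[𝓝 b] fun s => (deriv f (g s))⁻¹ := hg.mono fun s hs => hs.deriv
  have hcomp : HasDerivAt (fun s => deriv f (g s)) (f'' * (deriv f (g b))⁻¹) b :=
    hf'.comp b hg.self_of_nhds
  rw [hderiv.deriv_eq, (hcomp.fun_inv hf'0).deriv]
  field_simp

end LocalInverse

lemma eventuallyEq_deriv_of_eq_mul_sub_comp {𝕜 : Type*} [NontriviallyNormedField 𝕜]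
    {φ ψ G : 𝕜 → 𝕜} {t : 𝕜} (hφ : ∀ᶠ s in 𝓝 t, φ s = s * G s - ψ (G s))
    (hG : ∀ᶠ s in 𝓝 t, DifferentiableAt 𝕜 G s) (hψ : ∀ᶠ s in 𝓝 t, HasDerivAt ψ s (G s)) :
    deriv φ =ᶠ[𝓝 t] G := by
  filter_upwards [hφ.eventually_nhds, hG, hψ] with s hφs hGs hψs
  have := ((hasDerivAt_id s).mul hGs.hasDerivAt).sub (hψs.comp s hGs.hasDerivAt)
  rw [(this.congr_of_eventuallyEq hφs).deriv]
  simp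

lemma ConvexOn.apply_add_deriv_mul_sub_le {S : Set ℝ} {f : ℝ → ℝ} {x y : ℝ}
    (hf : ConvexOn ℝ S f) (hx : x ∈ S) (hy : y ∈ S) (hfx : DifferentiableAt ℝ f x) :
    f x + deriv f x * (y - x) ≤ f y := by
  rcases lt_trichotomy x y with hxy | rfl | hyx
  · have := hf.deriv_le_slope hx hy hxy hfx
    rw [slope_def_field, le_div_iff₀ (sub_pos.2 hxy)] at this
    linarith
  · simp
  · have := hf.slope_le_deriv hy hx hyx hfx
    rw [slope_def_field, div_le_iff₀ (sub_pos.2 hyx)] at this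
    linarith

/-- Outside `fenchelDomain ψ I` the supremum is over a set unbounded above, and `sSup` returns the
junk value `0`. -/
noncomputable def fenchelConj (ψ : ℝ → ℝ) (I : Set ℝ) (t : ℝ) : ℝ :=
  sSup ((fun u => t * u - ψ u) '' I)

def fenchelDomain (ψ : ℝ → ℝ) (I : Set ℝ) : Set ℝ :=
  {t | BddAbove ((fun u => t * u - ψ u) '' I)}

section Fenchel

variable {ψ : ℝ → ℝ} {I : Set ℝ}

lemma le_fenchelConj {t v : ℝ} (ht : t ∈ fenchelDomain ψ I) (hv : v ∈ I) :
    t * v - ψ v ≤ fenchelConj ψ I t :=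
  le_csSup ht (mem_image_of_mem _ hv)

lemma fenchelConj_eq_zero_of_notMem {t : ℝ} (ht : t ∉ fenchelDomain ψ I) :
    fenchelConj ψ I t = 0 :=
  Real.sSup_of_not_bddAbove ht

lemma smul_add_smul_mul_sub_le_fenchelConj {s r v a b : ℝ} (hs : s ∈ fenchelDomain ψ I)
    (hr : r ∈ fenchelDomain ψ I) (hv : v ∈ I) (ha : 0 ≤ a) (hb : 0 ≤ b) (hab : a + b = 1) :
    (a • s + b • r) * v - ψ v ≤ a • fenchelConj ψ I s + b • fenchelConj ψ I r := by
  have hsplit : (a • s + b • r) * v - ψ v = a * (s * v - ψ v) + b * (r * v - ψ v) := by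
    simp only [smul_eq_mul]
    linear_combination ψ v * hab
  rw [hsplit, smul_eq_mul, smul_eq_mul]
  gcongr
  exacts [le_fenchelConj hs hv, le_fenchelConj hr hv]

lemma convex_fenchelDomain : Convex ℝ (fenchelDomain ψ I) :=
  fun _ hs _ hr _ _ ha hb hab =>
    ⟨_, forall_mem_image.2 fun _ hv => smul_add_smul_mul_sub_le_fenchelConj hs hr hv ha hb hab⟩

lemma convexOn_fenchelConj (hI : I.Nonempty) :
    ConvexOn ℝ (fenchelDomain ψ I) (fenchelConj ψ I) :=
  ⟨convex_fenchelDomain, fun _ hs _ hr _ _ ha hb hab =>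
    csSup_le (hI.image _) (forall_mem_image.2 fun _ hv =>
      smul_add_smul_mul_sub_le_fenchelConj hs hr hv ha hb hab)⟩

lemma ConvexOn.isGreatest_deriv_mul_sub (hψ : ConvexOn ℝ I ψ) {u : ℝ} (hu : u ∈ I)
    (hψu : DifferentiableAt ℝ ψ u) :
    IsGreatest ((fun v => deriv ψ u * v - ψ v) '' I) (deriv ψ u * u - ψ u) :=
  ⟨mem_image_of_mem _ hu, forall_mem_image.2 fun v hv => by
    have := hψ.apply_add_deriv_mul_sub_le hu hv hψu
    linarith⟩

lemma ConvexOn.deriv_mem_fenchelDomain (hψ : ConvexOn ℝ I ψ) {u : ℝ} (hu : u ∈ I)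
    (hψu : DifferentiableAt ℝ ψ u) : deriv ψ u ∈ fenchelDomain ψ I :=
  (hψ.isGreatest_deriv_mul_sub hu hψu).bddAbove

lemma ConvexOn.fenchelConj_deriv (hψ : ConvexOn ℝ I ψ) {u : ℝ} (hu : u ∈ I)
    (hψu : DifferentiableAt ℝ ψ u) : fenchelConj ψ I (deriv ψ u) = deriv ψ u * u - ψ u :=
  (hψ.isGreatest_deriv_mul_sub hu hψu).csSup_eq

lemma ConvexOn.deriv_apply_deriv_fenchelConj (hI : IsOpen I) (hψ : ConvexOn ℝ I ψ)
    (hψd : ∀ u ∈ I, DifferentiableAt ℝ ψ u) {t : ℝ} (ht : t ∈ fenchelDomain ψ I)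
    (hφt : DifferentiableAt ℝ (fenchelConj ψ I) t) (hu : deriv (fenchelConj ψ I) t ∈ I) :
    deriv ψ (deriv (fenchelConj ψ I) t) = t := by
  set u := deriv (fenchelConj ψ I) t
  have hupper : fenchelConj ψ I t ≤ t * u - ψ u := by
    have := (convexOn_fenchelConj ⟨u, hu⟩).apply_add_deriv_mul_sub_le ht
      (hψ.deriv_mem_fenchelDomain hu (hψd u hu)) hφt
    rw [hψ.fenchelConj_deriv hu (hψd u hu)] at this
    linarith
  have hmax : IsLocalMax (fun v => t * v - ψ v) u := by
    filter_upwards [hI.mem_nhds hu] with v hv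
    linarith [le_fenchelConj ht hv]
  have := hmax.hasDerivAt_eq_zero (((hasDerivAt_id u).const_mul t).sub (hψd u hu).hasDerivAt)
  linarith

lemma iteratedDeriv_fenchelConj_eq_zero {t : ℝ} {n : WithTop ℕ∞} {k : ℕ}
    (ht : t ∉ fenchelDomain ψ I) (hφ : ContDiffAt ℝ n (fenchelConj ψ I) t) (hk : k ≤ n) :
    iteratedDeriv k (fenchelConj ψ I) t = 0 := by
  have hzero : EqOn (fenchelConj ψ I) 0 (fenchelDomain ψ I)ᶜ :=
    fun _ => fenchelConj_eq_zero_of_notMem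
  by_cases hr : Ioi t ⊆ (fenchelDomain ψ I)ᶜ
  · exact iteratedDeriv_eq_zero_of_eqOn_zero isOpen_Ioi (hzero.mono hr) (by simp) hφ hk
  by_cases hs : Iio t ⊆ (fenchelDomain ψ I)ᶜ
  · exact iteratedDeriv_eq_zero_of_eqOn_zero isOpen_Iio (hzero.mono hs) (by simp) hφ hk
  obtain ⟨r, hrt, hr⟩ := not_subset.1 hr
  obtain ⟨s, hst, hs⟩ := not_subset.1 hs
  exact absurd (convex_fenchelDomain.ordConnected.out (not_not.1 hs) (not_not.1 hr)
    ⟨le_of_lt hst, le_of_lt hrt⟩) ht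

lemma ConvexOn.iteratedDeriv_fenchelConj_deriv (hI : IsOpen I) (hψ : ConvexOn ℝ I ψ)
    (hψ3 : ContDiffOn ℝ 3 ψ I) (hψ2 : ∀ u ∈ I, 0 < iteratedDeriv 2 ψ u) {u : ℝ} (hu : u ∈ I) :
    iteratedDeriv 2 (fenchelConj ψ I) (deriv ψ u) = (iteratedDeriv 2 ψ u)⁻¹ ∧
      iteratedDeriv 3 (fenchelConj ψ I) (deriv ψ u) =
        -iteratedDeriv 3 ψ u / iteratedDeriv 2 ψ u ^ 3 := by
  simp only [iteratedDeriv_two_eq, iteratedDeriv_three_eq] at hψ2 ⊢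
  have hψd : ∀ v ∈ I, DifferentiableAt ℝ ψ v := fun v hv =>
    (hψ3.contDiffAt (hI.mem_nhds hv)).differentiableAt (by norm_num)
  have hψ' : ContDiffOn ℝ 2 (deriv ψ) I := hψ3.deriv_of_isOpen hI (by norm_num)
  have hψ'd : ∀ v ∈ I, DifferentiableAt ℝ (deriv ψ) v := fun v hv =>
    (hψ'.contDiffAt (hI.mem_nhds hv)).differentiableAt (by norm_num)
  have hψ''d : DifferentiableAt ℝ (deriv (deriv ψ)) u :=
    ((hψ'.deriv_of_isOpen hI (by norm_num) : ContDiffOn ℝ 1 _ I).contDiffAt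
      (hI.mem_nhds hu)).differentiableAt (by norm_num)
  obtain ⟨G, hGu, hG, hψ'G⟩ := (hψ'.contDiffAt (hI.mem_nhds hu)).exists_localInverse
    (by norm_num) (hψ'd u hu).hasDerivAt (hψ2 u hu).ne'
  have hGI : ∀ᶠ s in 𝓝 (deriv ψ u), G s ∈ I :=
    hG.continuousAt.preimage_mem_nhds (by rw [hGu]; exact hI.mem_nhds hu)
  have hG' : ∀ᶠ s in 𝓝 (deriv ψ u), HasDerivAt G (deriv (deriv ψ) (G s))⁻¹ s := by
    refine eventually_hasDerivAt_of_local_left_inverse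
      ((hG.eventually (by simp)).mono fun s hs => hs.continuousAt) hψ'G ?_
    filter_upwards [hGI] with s hs
    exact ⟨(hψ'd _ hs).hasDerivAt, (hψ2 _ hs).ne'⟩
  have hφ' : deriv (fenchelConj ψ I) =ᶠ[𝓝 (deriv ψ u)] G := by
    refine eventuallyEq_deriv_of_eq_mul_sub_comp (ψ := ψ) ?_
      (hG'.mono fun s hs => hs.differentiableAt) ?_
    · filter_upwards [hGI, hψ'G] with s hs hψs
      simpa only [hψs] using hψ.fenchelConj_deriv hs (hψd _ hs)
    · filter_upwards [hGI, hψ'G] with s hs hψs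
      simpa only [hψs] using (hψd _ hs).hasDerivAt
  refine ⟨?_, ?_⟩
  · rw [hφ'.deriv_eq, hG'.self_of_nhds.deriv, hGu]
  · rw [hφ'.deriv.deriv_eq, deriv_deriv_of_local_left_inverse hG'
      (by rw [hGu]; exact hψ''d.hasDerivAt) (by rw [hGu]; exact (hψ2 u hu).ne'), hGu]

end Fenchel

lemma abs_neg_div_pow_three_le {c d e : ℝ} (hd : 0 < d) (he : |e| ≤ c * d ^ (3 / 2 : ℝ)) :
    |-e / d ^ 3| ≤ c * d⁻¹ ^ (3 / 2 : ℝ) := by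
  have hcube : d ^ 3 = d ^ (3 / 2 : ℝ) * d ^ (3 / 2 : ℝ) := by
    rw [← Real.rpow_add hd]
    norm_num
  have hpos : 0 < d ^ (3 / 2 : ℝ) := by positivity
  rw [abs_div, abs_neg, abs_of_pos (pow_pos hd 3), div_le_iff₀ (by positivity),
    Real.inv_rpow hd.le, hcube]
  calc |e| ≤ c * d ^ (3 / 2 : ℝ) := he
    _ = c * (d ^ (3 / 2 : ℝ))⁻¹ * (d ^ (3 / 2 : ℝ) * d ^ (3 / 2 : ℝ)) := by field_simp

theorem stmt_9_general (I : Set ℝ) (hI : IsOpen I) (ψ φ : ℝ → ℝ) (c : ℝ)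
    (hψ : ContDiffOn ℝ 3 ψ I) (hconv : StrictConvexOn ℝ I ψ)
    (hψ'' : ∀ u ∈ I, 0 < iteratedDeriv 2 ψ u)
    (hsc : ∀ u ∈ I, |iteratedDeriv 3 ψ u| ≤ c * (iteratedDeriv 2 ψ u) ^ (3/2 : ℝ))
    (hφ : ∀ t, φ t = sSup ((fun u => t * u - ψ u) '' I))
    (hφdiff : ∀ t, deriv φ t ∈ I → ContDiffAt ℝ 3 φ t) :
    (∀ t, deriv φ t ∈ I →
      |iteratedDeriv 3 φ t| ≤ c * (iteratedDeriv 2 φ t) ^ (3/2 : ℝ)) ∧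
    (∀ u ∈ I, iteratedDeriv 2 φ (deriv ψ u) * iteratedDeriv 2 ψ u = 1) := by
  obtain rfl : φ = fenchelConj ψ I := funext hφ
  have hψd : ∀ u ∈ I, DifferentiableAt ℝ ψ u := fun u hu =>
    (hψ.contDiffAt (hI.mem_nhds hu)).differentiableAt (by norm_num)
  have hderivs u (hu : u ∈ I) := hconv.convexOn.iteratedDeriv_fenchelConj_deriv hI hψ hψ'' hu
  refine ⟨fun t ht => ?_, fun u hu => ?_⟩
  · by_cases hD : t ∈ fenchelDomain ψ I
    · obtain ⟨u, hu, rfl⟩ : ∃ u ∈ I, deriv ψ u = t :=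
        ⟨_, ht, hconv.convexOn.deriv_apply_deriv_fenchelConj hI hψd hD
          ((hφdiff t ht).differentiableAt (by norm_num)) ht⟩
      rw [(hderivs u hu).1, (hderivs u hu).2]
      exact abs_neg_div_pow_three_le (hψ'' u hu) (hsc u hu)
    · rw [iteratedDeriv_fenchelConj_eq_zero hD (hφdiff t ht) (by norm_num),
        iteratedDeriv_fenchelConj_eq_zero hD (hφdiff t ht) (by norm_num),
        Real.zero_rpow (by norm_num)]
      simp
  · rw [(hderivs u hu).1, inv_mul_cancel₀ (hψ'' u hu).ne']

/-- Canonical self-concordance is preserved under Fenchel conjugation: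
if ψ satisfies |ψ'''| ≤ c·(ψ'')^{3/2} with ψ'' > 0 on an open interval I, then its
Fenchel conjugate φ satisfies the same bound wherever φ'(t) ∈ I; moreover
φ''(ψ'(u))·ψ''(u) = 1 for u ∈ I. -/
theorem stmt_9 (I : Set ℝ) (hI : IsOpen I) (ψ φ : ℝ → ℝ) (c : ℝ) (hc : 0 ≤ c)
    (hψ : ContDiffOn ℝ 3 ψ I) (hconv : StrictConvexOn ℝ I ψ)
    (hψ'' : ∀ u ∈ I, 0 < iteratedDeriv 2 ψ u)
    (hsc : ∀ u ∈ I, |iteratedDeriv 3 ψ u| ≤ c * (iteratedDeriv 2 ψ u) ^ (3/2 : ℝ))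
    (hφ : ∀ t, φ t = sSup ((fun u => t * u - ψ u) '' I))
    (hφdiff : ∀ t, deriv φ t ∈ I → ContDiffAt ℝ 3 φ t) :
    (∀ t, deriv φ t ∈ I →
      |iteratedDeriv 3 φ t| ≤ c * (iteratedDeriv 2 φ t) ^ (3/2 : ℝ)) ∧
    (∀ u ∈ I, iteratedDeriv 2 φ (deriv ψ u) * iteratedDeriv 2 ψ u = 1) :=
  stmt_9_general I hI ψ φ c hψ hconv hψ'' hsc hφ hφdiff
end

section
/- The function φ(t) = (1/2)·[√(1 + 4t²) − 1 + log((√(1+4t²) − 1)/(2t²))] (extended by φ(0) = 0) is even, convex, satisfies φ''(0) = 1, |φ'(t)| < 1 for all t ∈ ℝ, and |φ'''(t)| ≤ 2√2 · (φ''(t))^{3/2} for all t ∈ ℝ. -/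
/-!
Writing `s = √(1 + 4t²)`, the identity `(s - 1)(s + 1) = 4t²` turns the argument of the
logarithm into `2 / (1 + s)`, so `φ = (s - 1)/2 + (log 2 - log (1 + s))/2` on all of `ℝ`,
including `t = 0`. In closed form `φ' = 2t/(1 + s)`, `φ'' = 2/(s(1 + s))` and
`φ''' = -8t(1 + 2s)/(s³(1 + s)²)`. Self-concordance `φ'''² ≤ 8 φ''³` reduces to
`t²(1 + 2s)² ≤ s³(1 + s)`, which after substituting `4t² = s² - 1` is `4s³ - 3s - 1 ≤ 4s³`.
-/

open Real

namespace PseudoHuber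

noncomputable def root (t : ℝ) : ℝ := √(1 + 4 * t ^ 2)

noncomputable def loss (t : ℝ) : ℝ := (root t - 1) / 2 + (log 2 - log (1 + root t)) / 2

lemma root_sq (t : ℝ) : root t ^ 2 = 1 + 4 * t ^ 2 := sq_sqrt (by positivity)

lemma one_le_root (t : ℝ) : 1 ≤ root t := one_le_sqrt.mpr (by nlinarith)

lemma root_pos (t : ℝ) : 0 < root t := one_pos.trans_le (one_le_root t)

lemma root_neg (t : ℝ) : root (-t) = root t := by simp only [root, neg_sq]

lemma two_mul_abs_le_root (t : ℝ) : 2 * |t| ≤ root t := by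
  rw [← abs_two, ← abs_mul, root]
  exact abs_le_sqrt (by nlinarith)

lemma ite_eq_loss (t : ℝ) :
    (if t = 0 then 0 else
      (1/2) * (√(1 + 4 * t ^ 2) - 1 + log ((√(1 + 4 * t ^ 2) - 1) / (2 * t ^ 2)))) = loss t := by
  have hs := root_pos t
  split_ifs with ht
  · norm_num [loss, root, ht]
  · have harg : (root t - 1) / (2 * t ^ 2) = 2 / (1 + root t) := by
      rw [div_eq_div_iff (by positivity) (by positivity)]
      nlinarith [root_sq t]
    rw [← root, harg, log_div two_ne_zero (by positivity), loss]
    ring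

lemma loss_neg (t : ℝ) : loss (-t) = loss t := by simp only [loss, root_neg]

lemma hasDerivAt_root (t : ℝ) : HasDerivAt root (4 * t / root t) t := by
  have hpoly : HasDerivAt (fun t : ℝ => 1 + 4 * t ^ 2) (8 * t) t :=
    (((hasDerivAt_pow 2 t).const_mul 4).const_add 1).congr_deriv (by ring)
  refine ((hasDerivAt_sqrt (by positivity)).comp t hpoly).congr_deriv ?_
  have hs := root_pos t
  rw [root] at hs ⊢
  field_simp
  ring

lemma hasDerivAt_loss (t : ℝ) : HasDerivAt loss (2 * t / (1 + root t)) t := by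
  have hs := root_pos t
  have h := (((hasDerivAt_root t).sub_const 1).div_const 2).add
    (((((hasDerivAt_root t).const_add 1).log (by positivity)).const_sub (log 2)).div_const 2)
  refine h.congr_deriv ?_
  field_simp
  nlinarith [root_sq t]

lemma hasDerivAt_deriv_loss (t : ℝ) :
    HasDerivAt (fun t => 2 * t / (1 + root t)) (2 / (root t * (1 + root t))) t := by
  have hs := root_pos t
  refine (((hasDerivAt_id' t).const_mul 2).div ((hasDerivAt_root t).const_add 1)
    (by positivity)).congr_deriv ?_
  field_simp
  nlinarith [root_sq t]

lemma hasDerivAt_deriv2_loss (t : ℝ) :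
    HasDerivAt (fun t => 2 / (root t * (1 + root t)))
      (-(8 * t * (1 + 2 * root t)) / (root t ^ 3 * (1 + root t) ^ 2)) t := by
  have hs := root_pos t
  have hden : HasDerivAt (fun t => root t * (1 + root t))
      (4 * t / root t * (1 + root t) + root t * (4 * t / root t)) t :=
    (hasDerivAt_root t).mul ((hasDerivAt_root t).const_add 1)
  refine ((hasDerivAt_const t (2 : ℝ)).div hden (by positivity)).congr_deriv ?_
  field_simp
  ring

lemma deriv_loss : deriv loss = fun t => 2 * t / (1 + root t) :=
  funext fun t => (hasDerivAt_loss t).deriv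

lemma iteratedDeriv_two_loss : iteratedDeriv 2 loss = fun t => 2 / (root t * (1 + root t)) := by
  rw [iteratedDeriv_succ, iteratedDeriv_one, deriv_loss]
  exact funext fun t => (hasDerivAt_deriv_loss t).deriv

lemma iteratedDeriv_three_loss :
    iteratedDeriv 3 loss =
      fun t => -(8 * t * (1 + 2 * root t)) / (root t ^ 3 * (1 + root t) ^ 2) := by
  rw [iteratedDeriv_succ, iteratedDeriv_two_loss]
  exact funext fun t => (hasDerivAt_deriv2_loss t).deriv

lemma iteratedDeriv_two_loss_pos (t : ℝ) : 0 < iteratedDeriv 2 loss t := by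
  have hs := root_pos t
  rw [iteratedDeriv_two_loss]
  positivity

lemma convexOn_loss : ConvexOn ℝ Set.univ loss := by
  refine convexOn_univ_of_deriv2_nonneg (fun t => (hasDerivAt_loss t).differentiableAt) ?_
    fun t => ?_
  · rw [deriv_loss]
    exact fun t => (hasDerivAt_deriv_loss t).differentiableAt
  · rw [← iteratedDeriv_eq_iterate]
    exact (iteratedDeriv_two_loss_pos t).le

lemma iteratedDeriv_two_loss_zero : iteratedDeriv 2 loss 0 = 1 := by
  norm_num [iteratedDeriv_two_loss, root]

lemma abs_deriv_loss_lt_one (t : ℝ) : |deriv loss t| < 1 := by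
  have hs := two_mul_abs_le_root t
  have ht := abs_nonneg t
  rw [deriv_loss, abs_div, abs_mul, abs_two, abs_of_pos (by linarith : 0 < 1 + root t),
    div_lt_one (by linarith)]
  linarith

lemma sq_mul_le_of_sq_eq {s t : ℝ} (hs : 0 ≤ s) (hst : s ^ 2 = 1 + 4 * t ^ 2) :
    t ^ 2 * (1 + 2 * s) ^ 2 ≤ s ^ 3 * (1 + s) := by
  have ht : 4 * t ^ 2 = (s - 1) * (s + 1) := by linear_combination -hst
  nlinarith [mul_nonneg (mul_nonneg hs (by positivity : (0 : ℝ) ≤ 3 * s + 1))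
    (by linarith : (0 : ℝ) ≤ s + 1)]

lemma abs_le_two_mul_sqrt_two_mul_rpow {x y : ℝ} (hy : 0 ≤ y) (h : x ^ 2 ≤ 8 * y ^ 3) :
    |x| ≤ 2 * √2 * y ^ (3 / 2 : ℝ) := by
  calc |x| ≤ √(8 * y ^ 3) := abs_le_sqrt h
    _ = 2 * √2 * y ^ (3 / 2 : ℝ) := by
      rw [sqrt_mul' _ (by positivity), show (8 : ℝ) = 2 ^ 2 * 2 by norm_num,
        sqrt_mul' _ zero_le_two, sqrt_sq zero_le_two, sqrt_eq_rpow (y ^ 3), ← rpow_natCast,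
        ← rpow_mul hy]
      norm_num

lemma sq_iteratedDeriv_three_loss_le (t : ℝ) :
    iteratedDeriv 3 loss t ^ 2 ≤ 8 * iteratedDeriv 2 loss t ^ 3 := by
  have hs := root_pos t
  rw [iteratedDeriv_three_loss, iteratedDeriv_two_loss, div_pow, div_pow,
    mul_div_assoc', div_le_div_iff₀ (by positivity) (by positivity)]
  have key := mul_le_mul_of_nonneg_right (sq_mul_le_of_sq_eq hs.le (root_sq t))
    (by positivity : (0 : ℝ) ≤ 64 * root t ^ 3 * (1 + root t) ^ 3)
  nlinarith [key]

end PseudoHuber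

open PseudoHuber in
/-- The canonically self-concordant pseudo-Huber loss
φ(t) = (1/2)(√(1+4t²) − 1 + log((√(1+4t²)−1)/(2t²))), extended by φ(0) = 0:
even, convex, φ''(0) = 1, |φ'| < 1, and |φ'''| ≤ 2√2 (φ'')^{3/2}. -/
theorem stmt_10 :
    let φ : ℝ → ℝ := fun t =>
      if t = 0 then 0 else
        (1/2) * (Real.sqrt (1 + 4 * t ^ 2) - 1 +
          Real.log ((Real.sqrt (1 + 4 * t ^ 2) - 1) / (2 * t ^ 2)))
    (∀ t, φ (-t) = φ t) ∧ ConvexOn ℝ Set.univ φ ∧ iteratedDeriv 2 φ 0 = 1 ∧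
    (∀ t, |deriv φ t| < 1) ∧
    (∀ t, |iteratedDeriv 3 φ t| ≤ 2 * Real.sqrt 2 * (iteratedDeriv 2 φ t) ^ (3/2 : ℝ)) := by
  intro φ
  rw [show φ = loss from funext ite_eq_loss]
  exact ⟨loss_neg, convexOn_loss, iteratedDeriv_two_loss_zero, abs_deriv_loss_lt_one,
    fun t => abs_le_two_mul_sqrt_two_mul_rpow (iteratedDeriv_two_loss_pos t).le
      (sq_iteratedDeriv_three_loss_le t)⟩
end

section
/- Let F : ℝ^d → ℝ be a convex C³ function, fix θ₀, θ₁, and set φ(t) = F(θ₀ + t(θ₁−θ₀)), H₀ = ∇²F(θ₀) ≻ 0. Suppose |φ'''(t)| ≤ S·φ''(t) for all t ∈ [0,1], where S = |⟨W, θ₁−θ₀⟩| for some vector W. Then ((e^{−S} + S − 1)/S²)·‖θ₁−θ₀‖²_{H₀} ≤ F(θ₁) − F(θ₀) − ⟨∇F(θ₀), θ₁−θ₀⟩ ≤ ((e^{S} − S − 1)/S²)·‖θ₁−θ₀‖²_{H₀}. -/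
/-!
Along the segment, `p := φ''` satisfies `|p'| ≤ S p`, so `p t * exp (-S t)` is antitone and
`p t * exp (S t)` is monotone (Grönwall), trapping `p t` between `p 0 * exp (-S t)` and
`p 0 * exp (S t)`.
Integrating these bounds against the kernel `1 - t` of Taylor's formula
`φ 1 - φ 0 - φ' 0 = ∫₀¹ (1 - t) φ'' t dt`, and using `∫₀¹ (1 - t) exp (c t) dt = (eᶜ - c - 1) / c²`,
gives both inequalities.
-/

open Real Set

noncomputable def expRemainderCoeff (S : ℝ) : ℝ :=
  if S = 0 then 1 / 2 else (exp S - S - 1) / S ^ 2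

lemma expRemainderCoeff_neg (S : ℝ) :
    expRemainderCoeff (-S) = if S = 0 then 1 / 2 else (exp (-S) + S - 1) / S ^ 2 := by
  simp only [expRemainderCoeff, neg_eq_zero, neg_sq, sub_neg_eq_add]

lemma integral_one_sub_mul_exp_mul (S : ℝ) :
    ∫ t in (0:ℝ)..1, (1 - t) * exp (S * t) = expRemainderCoeff S := by
  rw [expRemainderCoeff]
  split_ifs with hS
  · subst hS
    simp only [zero_mul, exp_zero, mul_one, intervalIntegral.integral_sub intervalIntegrable_const
      intervalIntegral.intervalIntegrable_id, integral_id]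
    norm_num
  · have hG : ∀ t : ℝ, HasDerivAt (fun t => exp (S * t) * (S * (1 - t) + 1) / S ^ 2)
        ((1 - t) * exp (S * t)) t := by
      intro t
      refine ((((hasDerivAt_id' t).const_mul S).exp.mul
        (((hasDerivAt_id' t).const_sub 1).const_mul S |>.add_const 1)).div_const
        (S ^ 2)).congr_deriv ?_
      field_simp
      ring
    rw [intervalIntegral.integral_eq_sub_of_hasDerivAt (fun t _ => hG t)
      (Continuous.intervalIntegrable (by fun_prop) _ _)]
    field_simp
    simp only [mul_zero, exp_zero]
    ring

lemma antitoneOn_mul_exp_neg_mul {p p' : ℝ → ℝ} {c : ℝ} {s : Set ℝ} (hs : Convex ℝ s)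
    (hp : ∀ t, HasDerivAt p (p' t) t) (hle : ∀ t ∈ interior s, p' t ≤ c * p t) :
    AntitoneOn (fun t => p t * exp (-c * t)) s := by
  have hderiv : ∀ t, HasDerivAt (fun t => p t * exp (-c * t))
      ((p' t - c * p t) * exp (-c * t)) t := by
    intro t
    refine ((hp t).mul ((hasDerivAt_id' t).const_mul (-c)).exp).congr_deriv ?_
    ring
  have hdiff : Differentiable ℝ (fun t => p t * exp (-c * t)) :=
    fun t => (hderiv t).differentiableAt
  refine antitoneOn_of_deriv_nonpos hs hdiff.continuous.continuousOn hdiff.differentiableOn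
    fun t ht => ?_
  rw [(hderiv t).deriv]
  exact mul_nonpos_of_nonpos_of_nonneg (by linarith [hle t ht]) (exp_nonneg _)

lemma exp_mul_bounds_of_abs_deriv_le {p p' : ℝ → ℝ} {S T t : ℝ}
    (hp : ∀ t, HasDerivAt p (p' t) t) (hb : ∀ t ∈ Ioo 0 T, |p' t| ≤ S * p t)
    (ht : t ∈ Icc 0 T) :
    p 0 * exp (-S * t) ≤ p t ∧ p t ≤ p 0 * exp (S * t) := by
  have h0 : (0:ℝ) ∈ Icc 0 T := ⟨le_rfl, ht.1.trans ht.2⟩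
  rw [interior_Icc.symm] at hb
  -- `-p` satisfies `(-p)' ≤ (-S) * (-p)`, which gives the lower bound
  have hlow := antitoneOn_mul_exp_neg_mul (convex_Icc 0 T) (fun t => (hp t).neg) (c := -S)
    (fun t ht => by simp only [Pi.neg_apply]; linarith [neg_abs_le (p' t), hb t ht]) h0 ht ht.1
  have hup := antitoneOn_mul_exp_neg_mul (convex_Icc 0 T) hp (c := S)
    (fun t ht => by linarith [le_abs_self (p' t), hb t ht]) h0 ht ht.1
  simp only [Pi.neg_apply, neg_neg, mul_zero, exp_zero, mul_one] at hlow hup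
  rw [neg_mul, exp_neg, ← div_eq_mul_inv] at hup ⊢
  rw [div_le_iff₀ (exp_pos _)] at hup ⊢
  constructor <;> linarith

lemma sub_sub_mul_deriv_eq_integral {φ : ℝ → ℝ} (hφ : ContDiff ℝ 2 φ) (a b : ℝ) :
    φ b - φ a - (b - a) * deriv φ a = ∫ t in a..b, (b - t) * iteratedDeriv 2 φ t := by
  have hφ' : ∀ t, HasDerivAt φ (deriv φ t) t := fun t =>
    ((hφ.differentiable (by norm_num)) t).hasDerivAt
  have hφ'' : ∀ t, HasDerivAt (deriv φ) (iteratedDeriv 2 φ t) t := fun t => by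
    have h := ((hφ.differentiable_iteratedDeriv 1 (by norm_num)) t).hasDerivAt
    rwa [← iteratedDeriv_succ, iteratedDeriv_one] at h
  have hG : ∀ t, HasDerivAt (fun t => φ t + (b - t) * deriv φ t)
      ((b - t) * iteratedDeriv 2 φ t) t := fun t => by
    refine ((hφ' t).add (((hasDerivAt_id' t).const_sub b).mul (hφ'' t))).congr_deriv ?_
    ring
  have hφ''c := hφ.continuous_iteratedDeriv 2 le_rfl
  rw [intervalIntegral.integral_eq_sub_of_hasDerivAt (fun t _ => hG t)
    (Continuous.intervalIntegrable (by fun_prop) _ _)]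
  ring

lemma integral_one_sub_mul_mono {f g : ℝ → ℝ} (hf : Continuous f) (hg : Continuous g)
    (hle : ∀ t ∈ Icc (0:ℝ) 1, f t ≤ g t) :
    ∫ t in (0:ℝ)..1, (1 - t) * f t ≤ ∫ t in (0:ℝ)..1, (1 - t) * g t :=
  intervalIntegral.integral_mono_on zero_le_one
    (Continuous.intervalIntegrable (by fun_prop) _ _)
    (Continuous.intervalIntegrable (by fun_prop) _ _)
    fun t ht => mul_le_mul_of_nonneg_left (hle t ht) (by linarith [ht.2])

theorem taylor_bounds_of_abs_iteratedDeriv_three_le {φ : ℝ → ℝ} {S : ℝ} (hφ : ContDiff ℝ 3 φ)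
    (hb : ∀ t ∈ Ioo 0 1, |iteratedDeriv 3 φ t| ≤ S * iteratedDeriv 2 φ t) :
    expRemainderCoeff (-S) * iteratedDeriv 2 φ 0 ≤ φ 1 - φ 0 - deriv φ 0 ∧
      φ 1 - φ 0 - deriv φ 0 ≤ expRemainderCoeff S * iteratedDeriv 2 φ 0 := by
  have hp : ∀ t, HasDerivAt (iteratedDeriv 2 φ) (iteratedDeriv 3 φ t) t := fun t => by
    have h := ((hφ.differentiable_iteratedDeriv 2 (by norm_num)) t).hasDerivAt
    rwa [← iteratedDeriv_succ] at h
  have hpc : Continuous (iteratedDeriv 2 φ) := hφ.continuous_iteratedDeriv 2 (by norm_num)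
  have htaylor := sub_sub_mul_deriv_eq_integral (hφ.of_le (by norm_num)) 0 1
  rw [sub_zero, one_mul] at htaylor
  have hexp (c : ℝ) : ∫ t in (0:ℝ)..1, (1 - t) * (iteratedDeriv 2 φ 0 * exp (c * t)) =
      expRemainderCoeff c * iteratedDeriv 2 φ 0 := by
    rw [← integral_one_sub_mul_exp_mul, ← intervalIntegral.integral_mul_const]
    exact intervalIntegral.integral_congr fun t _ => by ring
  have hbounds := fun t ht => exp_mul_bounds_of_abs_deriv_le hp hb (t := t) ht
  rw [htaylor, ← hexp, ← hexp]
  exact ⟨integral_one_sub_mul_mono (by fun_prop) hpc fun t ht => (hbounds t ht).1,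
    integral_one_sub_mul_mono hpc (by fun_prop) fun t ht => (hbounds t ht).2⟩

lemma iteratedDeriv_two_comp_add_smul {𝕜 E F : Type*} [NontriviallyNormedField 𝕜]
    [NormedAddCommGroup E] [NormedSpace 𝕜 E] [NormedAddCommGroup F] [NormedSpace 𝕜 F]
    {f : E → F} (hf : ContDiff 𝕜 2 f) (x y : E) (t : 𝕜) :
    iteratedDeriv 2 (fun s : 𝕜 => f (x + s • y)) t =
      fderiv 𝕜 (fun z => fderiv 𝕜 f z y) (x + t • y) y := by
  have hderiv : deriv (fun s : 𝕜 => f (x + s • y)) = fun s => fderiv 𝕜 f (x + s • y) y :=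
    funext fun s => ((hf.differentiable (by norm_num)) _).deriv_comp_add_smul
  have hf' : Differentiable 𝕜 (fun z => fderiv 𝕜 f z y) :=
    ((hf.fderiv_right (m := 1) (by norm_num)).clm_apply contDiff_const).differentiable one_ne_zero
  rw [iteratedDeriv_succ, iteratedDeriv_one, hderiv]
  exact (hf' _).deriv_comp_add_smul

theorem stmt_12_general (d : ℕ) (F : (Fin d → ℝ) → ℝ) (θ₀ θ₁ : Fin d → ℝ)
    (hF : ContDiff ℝ 3 F)
    (S : ℝ)
    (hsc : ∀ t ∈ Set.Icc (0:ℝ) 1,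
      |iteratedDeriv 3 (fun s => F (θ₀ + s • (θ₁ - θ₀))) t| ≤
        S * iteratedDeriv 2 (fun s => F (θ₀ + s • (θ₁ - θ₀))) t) :
    (if S = 0 then (1/2 : ℝ) else (Real.exp (-S) + S - 1) / S ^ 2) *
        fderiv ℝ (fun x => fderiv ℝ F x (θ₁ - θ₀)) θ₀ (θ₁ - θ₀)
      ≤ F θ₁ - F θ₀ - fderiv ℝ F θ₀ (θ₁ - θ₀) ∧
    F θ₁ - F θ₀ - fderiv ℝ F θ₀ (θ₁ - θ₀)
      ≤ (if S = 0 then (1/2 : ℝ) else (Real.exp S - S - 1) / S ^ 2) *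
        fderiv ℝ (fun x => fderiv ℝ F x (θ₁ - θ₀)) θ₀ (θ₁ - θ₀) := by
  have hφ : ContDiff ℝ 3 (fun s : ℝ => F (θ₀ + s • (θ₁ - θ₀))) := hF.comp (by fun_prop)
  have h := taylor_bounds_of_abs_iteratedDeriv_three_le hφ
    fun t ht => hsc t (Ioo_subset_Icc_self ht)
  rw [iteratedDeriv_two_comp_add_smul (hF.of_le (by norm_num)),
    ((hF.differentiable (by norm_num)) _).deriv_comp_add_smul] at h
  simp only [zero_smul, add_zero, one_smul, add_sub_cancel] at h
  rwa [expRemainderCoeff_neg] at h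

/-- Proposition (local), Case (a): Taylor bracketing of a convex C³ function F
along the segment [θ₀, θ₁] under pseudo self-concordance with parameter
S = |⟨W, θ₁−θ₀⟩|. Here the Hessian quadratic form at θ₀ is
v ↦ (∇²F(θ₀))[v,v] = fderiv ℝ (fun x => fderiv ℝ F x v) θ₀ v. For S = 0 the
bracketing coefficients are interpreted as 1/2. -/
theorem stmt_12 (d : ℕ) (F : (Fin d → ℝ) → ℝ) (θ₀ θ₁ W : Fin d → ℝ)
    (hF : ContDiff ℝ 3 F) (hconv : ConvexOn ℝ Set.univ F)
    (hH₀ : ∀ v : Fin d → ℝ, v ≠ 0 →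
      0 < fderiv ℝ (fun x => fderiv ℝ F x v) θ₀ v)
    (S : ℝ) (hSdef : S = |W ⬝ᵥ (θ₁ - θ₀)|)
    (hsc : ∀ t ∈ Set.Icc (0:ℝ) 1,
      |iteratedDeriv 3 (fun s => F (θ₀ + s • (θ₁ - θ₀))) t| ≤
        S * iteratedDeriv 2 (fun s => F (θ₀ + s • (θ₁ - θ₀))) t) :
    (if S = 0 then (1/2 : ℝ) else (Real.exp (-S) + S - 1) / S ^ 2) *
        fderiv ℝ (fun x => fderiv ℝ F x (θ₁ - θ₀)) θ₀ (θ₁ - θ₀)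
      ≤ F θ₁ - F θ₀ - fderiv ℝ F θ₀ (θ₁ - θ₀) ∧
    F θ₁ - F θ₀ - fderiv ℝ F θ₀ (θ₁ - θ₀)
      ≤ (if S = 0 then (1/2 : ℝ) else (Real.exp S - S - 1) / S ^ 2) *
        fderiv ℝ (fun x => fderiv ℝ F x (θ₁ - θ₀)) θ₀ (θ₁ - θ₀) :=
  stmt_12_general d F θ₀ θ₁ hF S hsc
end

section
/- For the logistic cumulant a(η) = log(1 + e^η), the third derivative satisfies a'''(η) = a''(η)·(1 − 2σ(η)), and consequently |a'''(η)| ≤ a''(η) for all η ∈ ℝ (pseudo self-concordance of the logistic loss). -/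
/-! Mathlib's `Real.sigmoid` is the σ of the statement, and `a' = σ`. Since `σ' = σ (1 - σ)`,
differentiating further gives `a'' = σ (1 - σ)` and `a''' = σ (1 - σ) (1 - 2σ)`; the bound then
follows from `0 < σ < 1`. -/

namespace Real

lemma sigmoid_eq_exp_div (x : ℝ) : sigmoid x = exp x / (1 + exp x) := by
  rw [sigmoid_def, exp_neg]
  field_simp
  ring

lemma hasDerivAt_log_one_add_exp (x : ℝ) :
    HasDerivAt (fun y => log (1 + exp y)) (sigmoid x) x := by
  rw [sigmoid_eq_exp_div]
  exact ((hasDerivAt_exp x).const_add 1).log (by positivity)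

lemma deriv_log_one_add_exp : deriv (fun x => log (1 + exp x)) = sigmoid :=
  funext fun x => (hasDerivAt_log_one_add_exp x).deriv

lemma deriv_sigmoid_mul_one_sub_sigmoid :
    deriv (fun x => sigmoid x * (1 - sigmoid x)) =
      fun x => sigmoid x * (1 - sigmoid x) * (1 - 2 * sigmoid x) := by
  funext x
  have h : HasDerivAt (fun y => sigmoid y * (1 - sigmoid y)) _ x :=
    (hasDerivAt_sigmoid x).mul ((hasDerivAt_sigmoid x).const_sub 1)
  rw [h.deriv]
  ring

lemma iteratedDeriv_two_log_one_add_exp :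
    iteratedDeriv 2 (fun x => log (1 + exp x)) = fun x => sigmoid x * (1 - sigmoid x) := by
  rw [iteratedDeriv_succ, iteratedDeriv_one, deriv_log_one_add_exp, deriv_sigmoid]

lemma iteratedDeriv_three_log_one_add_exp :
    iteratedDeriv 3 (fun x => log (1 + exp x)) =
      fun x => sigmoid x * (1 - sigmoid x) * (1 - 2 * sigmoid x) := by
  rw [iteratedDeriv_succ, iteratedDeriv_two_log_one_add_exp, deriv_sigmoid_mul_one_sub_sigmoid]

lemma abs_one_sub_two_mul_sigmoid_le_one (x : ℝ) : |1 - 2 * sigmoid x| ≤ 1 := by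
  have h₀ := sigmoid_pos x
  have h₁ := sigmoid_lt_one x
  rw [abs_le]
  constructor <;> linarith

end Real

open Real in
/-- Pseudo self-concordance of the logistic loss: for a(η) = log(1 + e^η),
a'''(η) = a''(η)(1 − 2σ(η)), hence |a'''(η)| ≤ a''(η). -/
theorem stmt_17 :
    let a : ℝ → ℝ := fun η => Real.log (1 + Real.exp η)
    let σ : ℝ → ℝ := fun η => 1 / (1 + Real.exp (-η))
    ∀ η : ℝ, iteratedDeriv 3 a η = iteratedDeriv 2 a η * (1 - 2 * σ η) ∧
      |iteratedDeriv 3 a η| ≤ iteratedDeriv 2 a η := by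
  intro a σ η
  have hσ : σ η = sigmoid η := by simp only [σ, one_div, sigmoid_def]
  have hvar : 0 ≤ sigmoid η * (1 - sigmoid η) :=
    mul_nonneg (sigmoid_nonneg η) (sub_nonneg.mpr (sigmoid_le_one η))
  have h₂ : iteratedDeriv 2 a η = sigmoid η * (1 - sigmoid η) :=
    congrFun iteratedDeriv_two_log_one_add_exp η
  have h₃ : iteratedDeriv 3 a η = sigmoid η * (1 - sigmoid η) * (1 - 2 * sigmoid η) :=
    congrFun iteratedDeriv_three_log_one_add_exp η
  rw [h₃, h₂, hσ]
  refine ⟨rfl, ?_⟩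
  rw [abs_mul, abs_of_nonneg hvar]
  exact mul_le_of_le_one_right hvar (abs_one_sub_two_mul_sigmoid_le_one η)
end
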